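/- arXiv:2204.09460 — 6 statements merged into one kernel-verified Lean document; each statement's English description precedes it below -/
import Mathlib

section
/- If A and A' are two non-disjoint subsets of a fine saturated (fs) sharp monoid M, each of which is ∞-close (i.e., all elements of the subset lie on a common ray: there exists a ∈ M and positive integers λᵢ with each element equal to λᵢ·a), then the union A ∪ A' is also ∞-close. -/
/-- A monoid is sharp if it has no nontrivial units. -/
def IsSharp (M : Type*) [AddCommMonoid M] : Prop := ∀ x y : M, x + y = 0 → x = 0

/-- Saturation, phrased via the divisibility order: if `n • x` divides `n • y` then
`x` divides `y`. -/
def IsSaturated (M : Type*) [AddCommMonoid M] : Prop :=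
  ∀ (n : ℕ) (x y : M), 0 < n → (∃ z, n • x + z = n • y) → ∃ z, x + z = y

/-- A subset `A` of `M` is `∞`-close if all of its elements lie on a common ray:
there is `a : M` and positive integers `λ` with `λ • a = x` for each `x ∈ A`. -/
def InftyClose {M : Type*} [AddCommMonoid M] (A : Set M) : Prop :=
  ∃ a : M, ∀ x ∈ A, ∃ k : ℕ, 0 < k ∧ k • a = x

/-!
If `c = k • a = l • b` is a common element, cancel `g = gcd k l`: multiplication by a positive
integer is injective in a sharp saturated cancellative monoid. For coprime `k, l` run Euclid's
algorithm: from `k • a = (k + m) • b` saturation gives `a = b + e` with `k • e = m • b`, and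
recursion yields `d` with `a = l • d`, `b = k • d`. Every element of `A ∪ A'` is then a positive
multiple of `d`.
-/

lemma exists_pos_nsmul_trans {M : Type*} [AddCommMonoid M] {a d x : M}
    (hx : ∃ k : ℕ, 0 < k ∧ k • a = x) (ha : ∃ l : ℕ, 0 < l ∧ l • d = a) :
    ∃ m : ℕ, 0 < m ∧ m • d = x := by
  obtain ⟨k, hk, rfl⟩ := hx
  obtain ⟨l, hl, rfl⟩ := ha
  exact ⟨k * l, Nat.mul_pos hk hl, mul_nsmul' d k l⟩

namespace IsSaturated

variable {M : Type*} [AddCancelCommMonoid M]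

lemma nsmul_injective (hsat : IsSaturated M) (hsharp : IsSharp M) {n : ℕ} (hn : 0 < n) :
    Function.Injective (n • · : M → M) := by
  intro x y h
  obtain ⟨z, hz⟩ := hsat n x y hn ⟨0, by rw [add_zero]; exact h⟩
  obtain ⟨w, hw⟩ := hsat n y x hn ⟨0, by rw [add_zero]; exact h.symm⟩
  have hzw : z + w = 0 := add_eq_left.mp (by rw [← add_assoc, hz, hw])
  rw [← hz, hsharp z w hzw, add_zero]

lemma exists_nsmul_eq_of_coprime (hsat : IsSaturated M) {k l : ℕ} (hkl : k.Coprime l)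
    {a b : M} (h : k • a = l • b) : ∃ d : M, l • d = a ∧ k • d = b := by
  induction hn : k + l using Nat.strong_induction_on generalizing k l a b with
  | _ n ih =>
    wlog hle : k ≤ l generalizing k l a b
    · obtain ⟨d, hdb, hda⟩ := this hkl.symm h.symm (by omega) (by omega)
      exact ⟨d, hda, hdb⟩
    obtain rfl | hk := Nat.eq_zero_or_pos k
    · rw [Nat.coprime_zero_left] at hkl
      subst hkl
      exact ⟨a, one_nsmul a, by rw [← one_nsmul b, ← h, zero_nsmul]⟩
    obtain ⟨m, rfl⟩ := Nat.exists_eq_add_of_le hle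
    obtain ⟨e, rfl⟩ := hsat k b a hk ⟨m • b, by rw [h, add_nsmul]⟩
    have hke : k • e = m • b := by
      rw [nsmul_add, add_nsmul] at h
      exact add_left_cancel h
    obtain ⟨d, hde, hdb⟩ :=
      ih (k + m) (by omega) (Nat.coprime_self_add_right.mp hkl) hke rfl
    exact ⟨d, by rw [add_nsmul, hdb, hde], hdb⟩

lemma exists_pos_nsmul_eq_of_nsmul_eq (hsat : IsSaturated M) (hsharp : IsSharp M) {k l : ℕ}
    (hk : 0 < k) (hl : 0 < l) {a b : M} (h : k • a = l • b) :
    ∃ d : M, (∃ l' : ℕ, 0 < l' ∧ l' • d = a) ∧ (∃ k' : ℕ, 0 < k' ∧ k' • d = b) := by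
  set g := Nat.gcd k l
  have hg : 0 < g := Nat.gcd_pos_of_pos_left l hk
  have hgk : g ∣ k := Nat.gcd_dvd_left k l
  have hgl : g ∣ l := Nat.gcd_dvd_right k l
  have h' : (k / g) • a = (l / g) • b := by
    apply hsat.nsmul_injective hsharp hg
    simp only [← mul_nsmul', Nat.mul_div_cancel' hgk, Nat.mul_div_cancel' hgl, h]
  obtain ⟨d, hda, hdb⟩ := hsat.exists_nsmul_eq_of_coprime (Nat.coprime_div_gcd_div_gcd hg) h'
  exact ⟨d, ⟨l / g, Nat.div_pos (Nat.le_of_dvd hl hgl) hg, hda⟩,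
    ⟨k / g, Nat.div_pos (Nat.le_of_dvd hk hgk) hg, hdb⟩⟩

end IsSaturated

theorem stmt_0_general {M : Type*} [AddCancelCommMonoid M] [DecidableEq M]
    (hsharp : IsSharp M) (hsat : IsSaturated M)
    (A A' : Finset M) (hne : (A ∩ A').Nonempty)
    (hA : InftyClose (A : Set M)) (hA' : InftyClose (A' : Set M)) :
    InftyClose ((A ∪ A' : Finset M) : Set M) := by
  obtain ⟨a, ha⟩ := hA
  obtain ⟨b, hb⟩ := hA'
  obtain ⟨c, hc⟩ := hne
  obtain ⟨k, hk, hkc⟩ := ha c (Finset.mem_inter.mp hc).1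
  obtain ⟨l, hl, hlc⟩ := hb c (Finset.mem_inter.mp hc).2
  obtain ⟨d, hda, hdb⟩ := hsat.exists_pos_nsmul_eq_of_nsmul_eq hsharp hk hl (hkc.trans hlc.symm)
  refine ⟨d, fun x hx => ?_⟩
  rcases Finset.mem_union.mp hx with hx | hx
  · exact exists_pos_nsmul_trans (ha x hx) hda
  · exact exists_pos_nsmul_trans (hb x hx) hdb

/-- For a fine saturated sharp monoid `M`, the union of two non-disjoint
`∞`-close subsets is `∞`-close. -/
theorem stmt_0 {M : Type*} [AddCancelCommMonoid M] [DecidableEq M] (hFG : AddMonoid.FG M)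
    (hsharp : IsSharp M) (hsat : IsSaturated M)
    (A A' : Finset M) (hne : (A ∩ A').Nonempty)
    (hA : InftyClose (A : Set M)) (hA' : InftyClose (A' : Set M)) :
    InftyClose ((A ∪ A' : Finset M) : Set M) :=
  stmt_0_general hsharp hsat A A' hne hA hA'
end

section
/- Let M be a monoid, r a positive integer, and A = {a₁,…,aₙ} ⊆ M a finite subset such that every two-element subset of A is r-close. Then A itself is r-close. -/
/-- A subset `A` of `M` is `r`-close if there are `a : M` and divisors `λ` of `r`
with `λ • a = x` for each `x ∈ A`. -/
def RClose {M : Type*} [AddCommMonoid M] (r : ℕ) (A : Set M) : Prop :=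
  ∃ a : M, ∀ x ∈ A, ∃ k : ℕ, k ∣ r ∧ k • a = x


/-!
Fix a nonzero `a ∈ A`. Closeness of `{x, a}` gives `r • x = f x • a`, and since sharp saturated
cancellative monoids are torsion-free, the coefficient `f x` is well defined; closeness of
`{x, y}` then forces `f x ∣ r * f y`, so `f x ∣ r * t` with `t = gcd f`. The coefficients `n`
for which `n • a` is `r`-divisible are closed under sums and, by saturation, under differences,
hence under `gcd`: so `r • z = t • a` for some `z`, and `x = (f x / t) • z` with `f x / t ∣ r`.
-/

open Function

theorem IsSaturated.isAddTorsionFree {M : Type*} [AddCancelCommMonoid M]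
    (hsat : IsSaturated M) (hsharp : IsSharp M) : IsAddTorsionFree M where
  nsmul_right_injective n hn x y h := by
    replace h : n • x = n • y := h
    obtain ⟨u, hu⟩ := hsat n x y (Nat.pos_of_ne_zero hn) ⟨0, by rw [add_zero, h]⟩
    obtain ⟨v, hv⟩ := hsat n y x (Nat.pos_of_ne_zero hn) ⟨0, by rw [add_zero, h]⟩
    have hu0 : u = 0 :=
      hsharp u v (add_left_cancel (a := x) (by rw [← add_assoc, hu, hv, add_zero]))
    rwa [hu0, add_zero] at hu

theorem AddSubmonoid.gcd_mem_of_sub_mem (S : AddSubmonoid ℕ)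
    (hsub : ∀ m ∈ S, ∀ n ∈ S, m ≤ n → n - m ∈ S) {m n : ℕ} (hm : m ∈ S) (hn : n ∈ S) :
    Nat.gcd m n ∈ S := by
  induction m, n using Nat.gcd.induction with
  | H0 n => simpa using hn
  | H1 m n _ ih =>
    have hmod : n % m ∈ S := by
      rw [Nat.mod_eq_sub_mul_div, mul_comm]
      exact hsub _ (S.nsmul_mem hm _) n hn (Nat.div_mul_le_self n m)
    rw [Nat.gcd_rec]
    exact ih hmod hm

theorem AddSubmonoid.finset_gcd_mem_of_sub_mem {ι : Type*} (S : AddSubmonoid ℕ)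
    (hsub : ∀ m ∈ S, ∀ n ∈ S, m ≤ n → n - m ∈ S) (s : Finset ι) {f : ι → ℕ}
    (hf : ∀ i ∈ s, f i ∈ S) : s.gcd f ∈ S := by
  classical
  induction s using Finset.induction_on with
  | empty => exact S.zero_mem
  | insert i s _ ih =>
    rw [Finset.gcd_insert]
    exact S.gcd_mem_of_sub_mem hsub (hf i (Finset.mem_insert_self i s))
      (ih fun j hj => hf j (Finset.mem_insert_of_mem hj))

section Monoid

variable {M : Type*} [AddCancelCommMonoid M]

def divisibleCoeffs (r : ℕ) (a : M) : AddSubmonoid ℕ where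
  carrier := {n | ∃ z : M, r • z = n • a}
  zero_mem' := ⟨0, by simp⟩
  add_mem' := by
    rintro m n ⟨z, hz⟩ ⟨w, hw⟩
    exact ⟨z + w, by rw [nsmul_add, hz, hw, add_nsmul]⟩

theorem IsSaturated.sub_mem_divisibleCoeffs (hsat : IsSaturated M) {r : ℕ} (hr : 0 < r)
    {a : M} {m n : ℕ} (hm : m ∈ divisibleCoeffs r a) (hn : n ∈ divisibleCoeffs r a)
    (hmn : m ≤ n) : n - m ∈ divisibleCoeffs r a := by
  obtain ⟨z, hz⟩ := hm
  obtain ⟨w, hw⟩ := hn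
  have hsplit : r • z + (n - m) • a = r • w := by
    rw [hz, hw, ← add_nsmul, Nat.add_sub_cancel' hmn]
  obtain ⟨u, hu⟩ := hsat r z w hr ⟨_, hsplit⟩
  refine ⟨u, add_left_cancel (a := r • z) ?_⟩
  rw [← nsmul_add, hu, hsplit]

theorem nsmul_left_injective_of_ne_zero [IsAddTorsionFree M] {a : M} (ha : a ≠ 0) :
    Injective (· • a : ℕ → M) :=
  injective_nsmul_iff_not_isOfFinAddOrder.mpr (not_isOfFinAddOrder_of_isAddTorsionFree ha)

theorem RClose.exists_nsmul_eq_nsmul {r : ℕ} {x y : M} (h : RClose r {x, y}) :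
    ∃ n : ℕ, r • x = n • y := by
  obtain ⟨b, hb⟩ := h
  obtain ⟨k, -, rfl⟩ := hb x (by simp)
  obtain ⟨l, hl, rfl⟩ := hb y (by simp)
  refine ⟨r / l * k, ?_⟩
  rw [smul_smul, smul_smul, mul_right_comm, Nat.div_mul_cancel hl]

theorem RClose.dvd_mul_of_nsmul_eq [IsAddTorsionFree M] {r m n : ℕ} {a x y : M} (ha : a ≠ 0)
    (h : RClose r {x, y}) (hx : r • x = m • a) (hy : r • y = n • a) : m ∣ r * n := by
  obtain ⟨b, hb⟩ := h
  obtain ⟨k, hk, rfl⟩ := hb x (by simp)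
  obtain ⟨l, -, rfl⟩ := hb y (by simp)
  have hcoeff : l * m = k * n := nsmul_left_injective_of_ne_zero ha <| by
    show (l * m) • a = (k * n) • a
    rw [mul_nsmul', ← hx, mul_nsmul', ← hy, smul_smul, smul_smul, smul_smul, smul_smul]
    ring_nf
  calc m ∣ l * m := dvd_mul_left m l
    _ = k * n := hcoeff
    _ ∣ r * n := mul_dvd_mul_right hk n

end Monoid

theorem stmt_1_general {M : Type*} [AddCancelCommMonoid M]
    (hsharp : IsSharp M) (hsat : IsSaturated M)
    (r : ℕ) (hr : 0 < r) (A : Finset M)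
    (h2 : ∀ x ∈ A, ∀ y ∈ A, RClose r ({x, y} : Set M)) :
    RClose r (A : Set M) := by
  have := hsat.isAddTorsionFree hsharp
  by_cases hA : ∀ x ∈ A, x = 0
  · exact ⟨0, fun x hx => ⟨1, one_dvd r, by rw [one_smul, hA x hx]⟩⟩
  push Not at hA
  obtain ⟨a, haA, ha⟩ := hA
  choose! f hf using fun x hx => (h2 x hx a haA).exists_nsmul_eq_nsmul
  set t := A.gcd f
  obtain ⟨z, hz⟩ : t ∈ divisibleCoeffs r a :=
    (divisibleCoeffs r a).finset_gcd_mem_of_sub_mem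
      (fun m hm n hn => hsat.sub_mem_divisibleCoeffs hr hm hn) A fun x hx => ⟨x, hf x hx⟩
  have htf : ∀ x ∈ A, t ∣ f x := fun x hx => Finset.gcd_dvd hx
  have hfa : f a = r := nsmul_left_injective_of_ne_zero ha (hf a haA).symm
  have ht : 0 < t := Nat.pos_of_dvd_of_pos (htf a haA) (hfa ▸ hr)
  refine ⟨z, fun x hx => ⟨f x / t, ?_, ?_⟩⟩
  · rw [Nat.div_dvd_iff_dvd_mul (htf x hx) ht, mul_comm, ← normalize_eq r, ← Finset.gcd_mul_left]
    exact Finset.dvd_gcd fun y hy => (h2 x hx y hy).dvd_mul_of_nsmul_eq ha (hf x hx) (hf y hy)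
  · refine nsmul_right_injective hr.ne' (?_ : r • _ = r • x)
    rw [smul_comm, hz, smul_smul, Nat.div_mul_cancel (htf x hx), hf x hx]

/-- If every two-element subset of a finite subset `A` of a fine saturated sharp
monoid is `r`-close, then `A` itself is `r`-close. -/
theorem stmt_1 {M : Type*} [AddCancelCommMonoid M] (hFG : AddMonoid.FG M)
    (hsharp : IsSharp M) (hsat : IsSaturated M)
    (r : ℕ) (hr : 0 < r) (A : Finset M)
    (h2 : ∀ x ∈ A, ∀ y ∈ A, RClose r ({x, y} : Set M)) :
    RClose r (A : Set M) :=
  stmt_1_general hsharp hsat r hr A h2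
end

section
/- Every cut of a connected graph is contained in a single circuit-connected component of its edge set. -/
/-!
Let the cut separate `A` from its complement, and let `e = ab` and `e' = a'b'` be distinct cut
edges with `a, a' ∈ A`. Without the cut edges, `A` and `Aᶜ` are still connected, so there are
simple paths `a ⋯ a'` inside `A` and `b' ⋯ b` inside `Aᶜ`. Closed up by `e'` and `e` they form a
circuit: the two paths are simple and lie on opposite sides, so no vertex or edge repeats, and
`e ≠ e'` are the only edges crossing the cut.
-/

structure Multigraph (V E : Type*) where
  fst : E → V
  snd : E → V

namespace Multigraph

variable {V E : Type*}

/-- The edge `e` joins vertices `u` and `w` (in either orientation). -/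
def Joins (G : Multigraph V E) (e : E) (u w : V) : Prop :=
  (G.fst e = u ∧ G.snd e = w) ∨ (G.fst e = w ∧ G.snd e = u)

/-- Reachability, using only edges in `F`. -/
def Reach (G : Multigraph V E) (F : Set E) : V → V → Prop :=
  Relation.EqvGen (fun u w => ∃ e ∈ F, G.Joins e u w)

/-- A graph is connected if any two vertices are joined by a walk. -/
def Connected (G : Multigraph V E) : Prop := ∀ u w : V, G.Reach Set.univ u w

/-- A cut of a connected graph: a set `c` of edges such that removing `c`
leaves exactly two connected components (`A` and `Aᶜ`), and every edge of `c`
joins these two components. -/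
def IsCut (G : Multigraph V E) (c : Set E) : Prop :=
  ∃ A : Set V, A.Nonempty ∧ Aᶜ.Nonempty ∧
    (∀ u w : V, G.Reach cᶜ u w ↔ ((u ∈ A ∧ w ∈ A) ∨ (u ∈ Aᶜ ∧ w ∈ Aᶜ))) ∧
    (∀ e ∈ c, (G.fst e ∈ A ∧ G.snd e ∈ Aᶜ) ∨ (G.fst e ∈ Aᶜ ∧ G.snd e ∈ A))

/-- A circuit: a cyclic sequence of pairwise distinct vertices and pairwise
distinct edges, the `i`-th edge joining the `i`-th and `(i+1)`-th vertices.
(Distinctness of the vertices encodes that every vertex is incident to at most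
two of the edges of the circuit.) -/
def IsCircuit (G : Multigraph V E) {n : ℕ} (v : ZMod n → V) (ed : ZMod n → E) : Prop :=
  0 < n ∧ Function.Injective v ∧ Function.Injective ed ∧
    ∀ i, G.Joins (ed i) (v i) (v (i + 1))

/-- Two edges are circuit-connected if some circuit contains both. -/
def CircuitConnected (G : Multigraph V E) (e e' : E) : Prop :=
  ∃ (n : ℕ) (v : ZMod n → V) (ed : ZMod n → E),
    G.IsCircuit v ed ∧ e ∈ Set.range ed ∧ e' ∈ Set.range ed

end Multigraph

namespace Multigraph

variable {V E : Type*} {G : Multigraph V E} {F : Set E} {u w : V}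

theorem Joins.symm {e : E} {u w : V} (h : G.Joins e u w) : G.Joins e w u :=
  Or.symm h

theorem Joins.eq_or_eq {e : E} {u w u' w' : V} (h : G.Joins e u w) (h' : G.Joins e u' w') :
    u = u' ∨ u = w' := by
  unfold Joins at h h'
  grind

/-- The darts of `L` form a walk from `u` to `w`; a dart `(x, e, y)` is the edge `e` traversed
from `x` to `y`, and the support of the walk is `L.map Prod.fst ++ [w]`. -/
def IsWalk (G : Multigraph V E) : V → V → List (V × E × V) → Prop
  | u, w, [] => u = w
  | u, w, d :: L => d.1 = u ∧ G.Joins d.2.1 d.1 d.2.2 ∧ G.IsWalk d.2.2 w L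

namespace IsWalk

variable {L : List (V × E × V)}

theorem append {x : V} {L₁ L₂ : List (V × E × V)} (h₁ : G.IsWalk u x L₁)
    (h₂ : G.IsWalk x w L₂) : G.IsWalk u w (L₁ ++ L₂) := by
  induction L₁ generalizing u with
  | nil => cases h₁; exact h₂
  | cons d L₁ ih => exact ⟨h₁.1, h₁.2.1, ih h₁.2.2⟩

theorem joins_of_mem (h : G.IsWalk u w L) {d : V × E × V} (hd : d ∈ L) :
    G.Joins d.2.1 d.1 d.2.2 := by
  induction L generalizing u with
  | nil => cases hd
  | cons d' L ih =>
    rcases List.mem_cons.1 hd with rfl | hd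
    · exact h.2.1
    · exact ih h.2.2 hd

theorem getElem_support_zero (h : G.IsWalk u w L) :
    (L.map Prod.fst ++ [w])[0]'(by simp) = u := by
  cases L with
  | nil => exact h.symm
  | cons d L => exact h.1

theorem getElem_snd_snd (h : G.IsWalk u w L) {i : ℕ} (hi : i < L.length) :
    L[i].2.2 = (L.map Prod.fst ++ [w])[i + 1]'(by simp; omega) := by
  induction L generalizing u i with
  | nil => cases hi
  | cons d L ih =>
    cases i with
    | zero => exact (h.2.2.getElem_support_zero).symm
    | succ i => simpa using ih h.2.2 (by simpa using hi)

theorem snd_snd_mem_support (h : G.IsWalk u w L) {d : V × E × V} (hd : d ∈ L) :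
    d.2.2 ∈ L.map Prod.fst ++ [w] := by
  obtain ⟨i, hi, rfl⟩ := List.mem_iff_getElem.1 hd
  rw [h.getElem_snd_snd hi]
  exact List.getElem_mem _

theorem reach_of_mem_support (h : G.IsWalk u w L)
    (hF : ∀ d ∈ L, d.2.1 ∈ F) {x : V} (hx : x ∈ L.map Prod.fst ++ [w]) : G.Reach F u x := by
  induction L generalizing u with
  | nil =>
    obtain rfl : x = w := by simpa using hx
    rw [h]
    exact Relation.EqvGen.refl _
  | cons d L ih =>
    obtain ⟨rfl, hd, hL⟩ := h
    have hstep : G.Reach F d.1 d.2.2 :=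
      Relation.EqvGen.rel _ _ ⟨d.2.1, hF d (List.mem_cons_self ..), hd⟩
    rw [List.map_cons, List.cons_append, List.mem_cons] at hx
    rcases hx with rfl | hx
    · exact Relation.EqvGen.refl _
    · exact hstep.trans _ _ _ (ih hL (fun d' hd' => hF d' (List.mem_cons_of_mem _ hd')) hx)

theorem nodup_edges (h : G.IsWalk u w L) (hnd : (L.map Prod.fst ++ [w]).Nodup) :
    (L.map (·.2.1)).Nodup := by
  induction L generalizing u with
  | nil => exact List.nodup_nil
  | cons d L ih =>
    obtain ⟨rfl, hd, hL⟩ := h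
    rw [List.map_cons, List.cons_append, List.nodup_cons] at hnd
    refine List.nodup_cons.2 ⟨?_, ih hL hnd.2⟩
    intro hmem
    obtain ⟨d', hd', heq⟩ := List.mem_map.1 hmem
    rcases hd.eq_or_eq (heq ▸ hL.joins_of_mem hd') with h1 | h1
    · exact hnd.1 (h1 ▸ List.mem_append_left _ (List.mem_map_of_mem hd'))
    · exact hnd.1 (h1 ▸ hL.snd_snd_mem_support hd')

theorem getElem_snd_snd_of_closed (h : G.IsWalk u u L) {i : ℕ} (hi : i < L.length) :
    L[i].2.2 = (L[(i + 1) % L.length]'(Nat.mod_lt _ (by omega))).1 := by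
  rw [h.getElem_snd_snd hi]
  rcases Nat.lt_or_ge (i + 1) L.length with hlt | hge
  · simp [List.getElem_append_left, hlt, Nat.mod_eq_of_lt hlt]
  · obtain ⟨d, L, rfl⟩ := List.exists_cons_of_length_pos (by omega : 0 < L.length)
    obtain rfl : i = L.length := by simp at hi hge; omega
    simp [h.1]

theorem circuitConnected (h : G.IsWalk u u L)
    (hv : (L.map Prod.fst).Nodup) (he : (L.map (·.2.1)).Nodup) {d d' : V × E × V}
    (hd : d ∈ L) (hd' : d' ∈ L) : G.CircuitConnected d.2.1 d'.2.1 := by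
  have hpos : 0 < L.length := List.length_pos_of_mem hd
  have : NeZero L.length := ⟨hpos.ne'⟩
  let ed : ZMod L.length → E := fun i => (L[i.val]'(ZMod.val_lt i)).2.1
  have hrange : ∀ d ∈ L, d.2.1 ∈ Set.range ed := by
    intro d hd
    obtain ⟨i, hi, rfl⟩ := List.mem_iff_getElem.1 hd
    exact ⟨i, by simp [ed, ZMod.val_cast_of_lt hi]⟩
  refine ⟨L.length, fun i => (L[i.val]'(ZMod.val_lt i)).1, ed,
    ⟨hpos, ?_, ?_, fun i => ?_⟩, hrange d hd, hrange d' hd'⟩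
  · intro i j hij
    refine ZMod.val_injective _ ((hv.getElem_inj_iff (hi := by simp [ZMod.val_lt])
      (hj := by simp [ZMod.val_lt])).1 ?_)
    simpa using hij
  · intro i j hij
    refine ZMod.val_injective _ ((he.getElem_inj_iff (hi := by simp [ZMod.val_lt])
      (hj := by simp [ZMod.val_lt])).1 ?_)
    simpa using hij
  · have hval : (i + 1).val = (i.val + 1) % L.length := by
      rw [ZMod.val_add, ZMod.val_one_eq_one_mod, Nat.add_mod_mod]
    convert h.joins_of_mem (List.getElem_mem (ZMod.val_lt i)) using 2
    simp only [hval]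
    exact (h.getElem_snd_snd_of_closed _).symm

end IsWalk

def simpleGraph (G : Multigraph V E) (F : Set E) : SimpleGraph V :=
  SimpleGraph.fromRel fun x y => ∃ e ∈ F, G.Joins e x y

theorem Reach.reachable_simpleGraph (h : G.Reach F u w) : (G.simpleGraph F).Reachable u w := by
  induction h with
  | rel x y hxy =>
    by_cases hxy' : x = y
    · rw [hxy']
    · exact SimpleGraph.Adj.reachable ((SimpleGraph.fromRel_adj _ _ _).2 ⟨hxy', Or.inl hxy⟩)
  | refl x => rfl
  | symm x y _ ih => exact ih.symm
  | trans x y z _ _ ih₁ ih₂ => exact ih₁.trans ih₂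

theorem exists_isWalk_of_walk (p : (G.simpleGraph F).Walk u w) :
    ∃ L, G.IsWalk u w L ∧ (∀ d ∈ L, d.2.1 ∈ F) ∧ L.map Prod.fst ++ [w] = p.support := by
  induction p with
  | nil => exact ⟨[], rfl, by simp, rfl⟩
  | @cons x y w hxy p ih =>
    obtain ⟨L, hL, hLF, hsupp⟩ := ih
    obtain ⟨e, heF, hexy⟩ : ∃ e ∈ F, G.Joins e x y := by
      obtain ⟨-, ⟨e, heF, he⟩ | ⟨e, heF, he⟩⟩ := (SimpleGraph.fromRel_adj _ _ _).1 hxy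
      exacts [⟨e, heF, he⟩, ⟨e, heF, he.symm⟩]
    refine ⟨(x, e, y) :: L, ⟨rfl, hexy, hL⟩, ?_, by simp [hsupp]⟩
    simpa [heF] using hLF

theorem exists_isWalk_nodup_of_reach (h : G.Reach F u w) :
    ∃ L, G.IsWalk u w L ∧ (∀ d ∈ L, d.2.1 ∈ F) ∧ (L.map Prod.fst ++ [w]).Nodup := by
  classical
  obtain ⟨p⟩ := h.reachable_simpleGraph
  obtain ⟨L, hL, hLF, hsupp⟩ := exists_isWalk_of_walk p.toPath.1
  exact ⟨L, hL, hLF, hsupp ▸ p.toPath.2.support_nodup⟩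

theorem circuitConnected_of_joins_of_reach {A : Set V}
    (hside : ∀ x y, G.Reach F x y → (x ∈ A ↔ y ∈ A)) {e e' : E} (hne : e ≠ e') {a b a' b' : V}
    (he : G.Joins e a b) (he' : G.Joins e' a' b') (ha : a ∈ A) (hb : b ∉ A) (ha' : a' ∈ A)
    (hb' : b' ∉ A) (haa' : G.Reach F a a') (hbb' : G.Reach F b' b) :
    G.CircuitConnected e e' := by
  obtain ⟨P, hP, hPF, hPnd⟩ := exists_isWalk_nodup_of_reach haa'
  obtain ⟨Q, hQ, hQF, hQnd⟩ := exists_isWalk_nodup_of_reach hbb'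
  have hPA : ∀ x ∈ P.map Prod.fst ++ [a'], x ∈ A := fun x hx =>
    (hside _ _ (hP.reach_of_mem_support hPF hx)).1 ha
  have hQA : ∀ x ∈ Q.map Prod.fst ++ [b], x ∉ A := fun x hx hxA =>
    hb' ((hside _ _ (hQ.reach_of_mem_support hQF hx)).2 hxA)
  have hcross : ∀ {f x y}, G.Joins f x y → x ∈ A → y ∉ A → f ∉ F := fun hf hx hy hfF =>
    hy ((hside _ _ (Relation.EqvGen.rel _ _ ⟨_, hfF, hf⟩)).1 hx)
  let L := P ++ (a', e', b') :: (Q ++ [(b, e, a)])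
  have hL : G.IsWalk a a L := hP.append ⟨rfl, he', hQ.append ⟨rfl, he.symm, rfl⟩⟩
  have hv : (L.map Prod.fst).Nodup := by
    have : L.map Prod.fst = (P.map Prod.fst ++ [a']) ++ (Q.map Prod.fst ++ [b]) := by simp [L]
    rw [this, List.nodup_append]
    exact ⟨hPnd, hQnd, fun x hx y hy hxy => hQA y hy (hxy ▸ hPA x hx)⟩
  have hPQ : ∀ d ∈ P, ∀ d' ∈ Q, d.2.1 ≠ d'.2.1 := by
    intro d hd d' hd' hdd'
    have hdA : d.1 ∈ A := hPA _ (List.mem_append_left _ (List.mem_map_of_mem hd))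
    rcases (hP.joins_of_mem hd).eq_or_eq (hdd' ▸ hQ.joins_of_mem hd') with h | h
    · exact hQA _ (List.mem_append_left _ (List.mem_map_of_mem hd')) (h ▸ hdA)
    · exact hQA _ (hQ.snd_snd_mem_support hd') (h ▸ hdA)
  have hE : (L.map (·.2.1)).Nodup := by
    have heF : e ∉ F := hcross he ha hb
    have he'F : e' ∉ F := hcross he' ha' hb'
    simp only [L, List.map_append, List.map_cons, List.map_nil, List.nodup_append,
      List.nodup_cons, hP.nodup_edges hPnd, hQ.nodup_edges hQnd, List.mem_append, List.mem_cons,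
      List.mem_map, List.not_mem_nil, List.nodup_nil, or_false, not_false_eq_true, and_true,
      true_and]
    refine ⟨⟨?_, ?_⟩, ?_⟩
    · rintro (⟨d, hd, rfl⟩ | rfl)
      exacts [he'F (hQF d hd), hne rfl]
    · rintro _ ⟨d, hd, rfl⟩ _ rfl h
      exact heF (h ▸ hQF d hd)
    · rintro _ ⟨d, hd, rfl⟩ _ (rfl | ⟨d', hd', rfl⟩ | rfl) h
      exacts [he'F (h ▸ hPF d hd), hPQ d hd d' hd' h, heF (h ▸ hPF d hd)]
  exact hL.circuitConnected hv hE (d := (b, e, a)) (by simp [L]) (d' := (a', e', b'))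
    (by simp [L])

end Multigraph

theorem stmt_3_general {V E : Type*}
    (G : Multigraph V E)
    (c : Set E) (hc : G.IsCut c) :
    ∀ e ∈ c, ∀ e' ∈ c, e = e' ∨ G.CircuitConnected e e' := by
  obtain ⟨A, -, -, hreach, hcross⟩ := hc
  have hside : ∀ x y, G.Reach cᶜ x y → (x ∈ A ↔ y ∈ A) := fun x y h => by
    rcases (hreach x y).1 h with ⟨hx, hy⟩ | ⟨hx, hy⟩
    exacts [iff_of_true hx hy, iff_of_false hx hy]
  have horient : ∀ f ∈ c, ∃ a b, G.Joins f a b ∧ a ∈ A ∧ b ∉ A := fun f hf => by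
    rcases hcross f hf with ⟨h₁, h₂⟩ | ⟨h₁, h₂⟩
    exacts [⟨_, _, Or.inl ⟨rfl, rfl⟩, h₁, h₂⟩, ⟨_, _, Or.inr ⟨rfl, rfl⟩, h₂, h₁⟩]
  intro e he e' he'
  refine or_iff_not_imp_left.2 fun hne => ?_
  obtain ⟨a, b, hab, ha, hb⟩ := horient e he
  obtain ⟨a', b', hab', ha', hb'⟩ := horient e' he'
  exact G.circuitConnected_of_joins_of_reach hside hne hab hab' ha hb ha' hb'
    ((hreach a a').2 (Or.inl ⟨ha, ha'⟩)) ((hreach b' b).2 (Or.inr ⟨hb', hb⟩))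

/-- Every cut of a connected graph is contained in a single circuit-connected
component of its edge set: any two edges of the cut are equal or
circuit-connected. -/
theorem stmt_3 {V E : Type*} [Fintype V] [Fintype E]
    (G : Multigraph V E) (hconn : G.Connected)
    (c : Set E) (hc : G.IsCut c) :
    ∀ e ∈ c, ∀ e' ∈ c, e = e' ∨ G.CircuitConnected e e' :=
  stmt_3_general G c hc
end

section
/- Let M be an integral monoid and I₁, I₂ ideals of M. If a·b is a smallest element of the product ideal I₁·I₂ with a ∈ I₁ and b ∈ I₂, then a is a smallest element of I₁ and b is a smallest element of I₂. -/
/-- A monoid ideal of an (additive) commutative monoid. -/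
def IsMonoidIdeal {M : Type*} [AddCommMonoid M] (I : Set M) : Prop :=
  ∀ a ∈ I, ∀ m : M, m + a ∈ I

/-- The product of two monoid ideals. -/
def prodIdeal {M : Type*} [AddCommMonoid M] (I₁ I₂ : Set M) : Set M :=
  {x | ∃ a ∈ I₁, ∃ b ∈ I₂, x = a + b}

/-- `x` is a smallest element of `I` (for the divisibility preorder). -/
def IsSmallest {M : Type*} [AddCommMonoid M] (I : Set M) (x : M) : Prop :=
  x ∈ I ∧ ∀ y ∈ I, ∃ z, x + z = y

/-- If `a + b` is a smallest element of the product ideal `I₁·I₂` of an integral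
monoid, with `a ∈ I₁` and `b ∈ I₂`, then `a` is a smallest element of `I₁` and
`b` is a smallest element of `I₂`. -/
theorem stmt_7 {M : Type*} [AddCancelCommMonoid M] (I₁ I₂ : Set M)
    (h₁ : IsMonoidIdeal I₁) (h₂ : IsMonoidIdeal I₂)
    (a b : M) (ha : a ∈ I₁) (hb : b ∈ I₂)
    (hmin : IsSmallest (prodIdeal I₁ I₂) (a + b)) :
    IsSmallest I₁ a ∧ IsSmallest I₂ b := by
  obtain ⟨-, hm⟩ := hmin
  constructor
  · refine ⟨ha, fun y hy => ?_⟩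
    obtain ⟨z, hz⟩ := hm (y + b) ⟨y, hy, b, hb, rfl⟩
    refine ⟨z, ?_⟩
    have : (a + z) + b = y + b := by
      rw [← hz]; abel
    exact add_right_cancel this
  · refine ⟨hb, fun y hy => ?_⟩
    obtain ⟨z, hz⟩ := hm (a + y) ⟨a, ha, y, hy, rfl⟩
    refine ⟨z, ?_⟩
    have : a + (b + z) = a + y := by
      rw [← hz]; abel
    exact add_left_cancel this
end

section
/- Let G = (V,E) be a connected graph, and let P be the set of partial orders on E with the property that every cut of G has a smallest element. Let ≤ be a minimal element of P (no strictly weaker partial order lies in P). Then every circuit-connected component of E has a unique minimal edge for ≤, and every other edge e in that component has a unique largest edge strictly smaller than it (i.e., the set {e' : e' < e} has a greatest element). -/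
namespace Multigraph

variable {V E : Type*}

/-- crossing edges of a vertex set -/
def DD (G : Multigraph V E) (U : Set V) : Set E :=
  {e | (G.fst e ∈ U) ↔ (G.snd e ∉ U)}

lemma joins_symm {G : Multigraph V E} {e u w} (h : G.Joins e u w) : G.Joins e w u := by
  rcases h with ⟨h1, h2⟩ | ⟨h1, h2⟩
  · exact Or.inr ⟨h1, h2⟩
  · exact Or.inl ⟨h1, h2⟩

lemma joins_fst_snd (G : Multigraph V E) (e : E) : G.Joins e (G.fst e) (G.snd e) :=
  Or.inl ⟨rfl, rfl⟩

lemma mem_DD_iff {G : Multigraph V E} {U : Set V} {e u w} (h : G.Joins e u w) :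
    e ∈ G.DD U ↔ ((u ∈ U ∧ w ∉ U) ∨ (u ∉ U ∧ w ∈ U)) := by
  rcases h with ⟨h1, h2⟩ | ⟨h1, h2⟩ <;> subst h1 <;> subst h2 <;>
    simp only [DD, Set.mem_setOf_eq] <;> tauto

lemma DD_compl (G : Multigraph V E) (U : Set V) : G.DD Uᶜ = G.DD U := by
  ext e; simp only [DD, Set.mem_setOf_eq, Set.mem_compl_iff]; tauto

lemma reach_refl {G : Multigraph V E} (F : Set E) (u : V) : G.Reach F u u :=
  Relation.EqvGen.refl u

lemma reach_symm {G : Multigraph V E} {F : Set E} {u w} (h : G.Reach F u w) :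
    G.Reach F w u := Relation.EqvGen.symm _ _ h

lemma reach_trans {G : Multigraph V E} {F : Set E} {u w z} (h : G.Reach F u w)
    (h' : G.Reach F w z) : G.Reach F u z := Relation.EqvGen.trans _ _ _ h h'

lemma reach_step {G : Multigraph V E} {F : Set E} {e u w} (he : e ∈ F)
    (h : G.Joins e u w) : G.Reach F u w := Relation.EqvGen.rel _ _ ⟨e, he, h⟩

lemma reach_mono {G : Multigraph V E} {F F' : Set E} (hFF : F ⊆ F') {u w}
    (h : G.Reach F u w) : G.Reach F' u w := by
  induction h with
  | rel a b hab => exact Relation.EqvGen.rel _ _ (by obtain ⟨e, he, hj⟩ := hab; exact ⟨e, hFF he, hj⟩)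
  | refl a => exact Relation.EqvGen.refl a
  | symm a b _ ih => exact Relation.EqvGen.symm _ _ ih
  | trans a b c _ _ ih1 ih2 => exact Relation.EqvGen.trans _ _ _ ih1 ih2

/-- reach avoiding all crossing edges of `U` preserves membership in `U`. -/
lemma reach_side {G : Multigraph V E} {F : Set E} {U : Set V}
    (hF : ∀ e ∈ F, e ∉ G.DD U) {u w} (h : G.Reach F u w) : u ∈ U ↔ w ∈ U := by
  induction h with
  | rel a b hab =>
      obtain ⟨e, he, hj⟩ := hab
      have := hF e he
      rw [mem_DD_iff hj] at this
      tauto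
  | refl a => rfl
  | symm a b _ ih => exact ih.symm
  | trans a b c _ _ ih1 ih2 => exact ih1.trans ih2

/-- a cut equals the set of crossing edges of its witness. -/
lemma cut_eq_DD {G : Multigraph V E} {c : Set E} {A : Set V}
    (hiff : ∀ u w : V, G.Reach cᶜ u w ↔ ((u ∈ A ∧ w ∈ A) ∨ (u ∈ Aᶜ ∧ w ∈ Aᶜ)))
    (hcross : ∀ e ∈ c, (G.fst e ∈ A ∧ G.snd e ∈ Aᶜ) ∨ (G.fst e ∈ Aᶜ ∧ G.snd e ∈ A)) :
    c = G.DD A := by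
  ext e
  constructor
  · intro he
    rcases hcross e he with ⟨h1, h2⟩ | ⟨h1, h2⟩ <;>
      simp only [DD, Set.mem_setOf_eq] <;> simp only [Set.mem_compl_iff] at h1 h2 <;> tauto
  · intro he
    by_contra hec
    have : G.Reach cᶜ (G.fst e) (G.snd e) := reach_step hec (joins_fst_snd G e)
    rw [hiff] at this
    simp only [DD, Set.mem_setOf_eq] at he
    simp only [Set.mem_compl_iff] at this
    tauto




/-- an `n`-step walk with vertices `f` and edges `g`, using only edges in `F`. -/
def WalkW (G : Multigraph V E) (F : Set E) (f : ℕ → V) (g : ℕ → E) (n : ℕ) : Prop :=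
  ∀ i < n, g i ∈ F ∧ G.Joins (g i) (f i) (f (i + 1))

lemma walk_reach {G : Multigraph V E} {F f g n} (h : G.WalkW F f g n) :
    ∀ k ≤ n, G.Reach F (f 0) (f k) := by
  intro k hk
  induction k with
  | zero => exact reach_refl F _
  | succ m ih =>
      have hm := h m (by omega)
      exact reach_trans (ih (by omega)) (reach_step hm.1 hm.2)

lemma reach_walk {G : Multigraph V E} [Nonempty E] {F : Set E} {a b : V} (h : G.Reach F a b) :
    ∃ n f g, G.WalkW F f g n ∧ f 0 = a ∧ f n = b := by
  induction h with
  | rel u w huw =>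
      obtain ⟨e, he, hj⟩ := huw
      exact ⟨1, fun i => if i = 0 then u else w, fun _ => e, by
        intro i hi
        have : i = 0 := by omega
        subst this
        simpa using ⟨he, hj⟩, rfl, rfl⟩
  | refl u =>
      refine ⟨0, fun _ => u, fun _ => Classical.arbitrary E, ?_, rfl, rfl⟩
      intro i hi; omega
  | symm u w _ ih =>
      obtain ⟨n, f, g, hw, h0, hn⟩ := ih
      refine ⟨n, fun i => f (n - i), fun i => g (n - 1 - i), ?_, by simpa using hn, by simpa using h0⟩
      intro i hi
      have hw' := hw (n - 1 - i) (by omega)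
      have e1 : n - 1 - i + 1 = n - i := by omega
      rw [e1] at hw'
      show g (n - 1 - i) ∈ F ∧ G.Joins (g (n - 1 - i)) (f (n - i)) (f (n - (i+1)))
      have e2 : n - (i+1) = n - 1 - i := by omega
      rw [e2]
      exact ⟨hw'.1, joins_symm hw'.2⟩
  | trans u w z _ _ ih1 ih2 =>
      obtain ⟨n1, f1, g1, hw1, h10, h1n⟩ := ih1
      obtain ⟨n2, f2, g2, hw2, h20, h2n⟩ := ih2
      refine ⟨n1 + n2, fun i => if i ≤ n1 then f1 i else f2 (i - n1),
        fun i => if i < n1 then g1 i else g2 (i - n1), ?_, by simp [h10], ?_⟩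
      · intro i hi
        by_cases hc : i < n1
        · have := hw1 i hc
          simp only [if_pos hc, if_pos (by omega : i ≤ n1), if_pos (by omega : i + 1 ≤ n1)]
          exact this
        · have hb : n1 ≤ i := by omega
          have := hw2 (i - n1) (by omega)
          have hmid : f2 (i - n1) = if i ≤ n1 then f1 i else f2 (i - n1) := by
            by_cases h' : i ≤ n1
            · have : i = n1 := by omega
              subst this
              simp [h1n, h20]
            · simp [h']
          simp only [if_neg hc, if_neg (by omega : ¬ i + 1 ≤ n1)]
          rw [← hmid]
          have e3 : i + 1 - n1 = i - n1 + 1 := by omega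
          rw [e3]
          exact this
      · by_cases h' : n1 + n2 ≤ n1
        · have hn2 : n2 = 0 := by omega
          simp [h', hn2, h1n, ← h20, hn2 ▸ h2n]
        · simp only [if_neg h']
          simpa using h2n

/-- get a vertex-injective walk from any reach. -/
lemma reach_walk_inj {G : Multigraph V E} [Nonempty E] {F : Set E} {a b : V} (h : G.Reach F a b) :
    ∃ n f g, G.WalkW F f g n ∧ f 0 = a ∧ f n = b ∧
      ∀ i ≤ n, ∀ j ≤ n, f i = f j → i = j := by
  classical
  let s : Set ℕ := {n | ∃ f g, G.WalkW F f g n ∧ f 0 = a ∧ f n = b}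
  have hs : s.Nonempty := by
    obtain ⟨n, f, g, hw⟩ := reach_walk h
    exact ⟨n, f, g, hw⟩
  obtain ⟨f, g, hw, h0, hn⟩ : sInf s ∈ s := Nat.sInf_mem hs
  set n := sInf s with hndef
  refine ⟨n, f, g, hw, h0, hn, ?_⟩
  by_contra hinj
  push_neg at hinj
  obtain ⟨i, hi, j, hj, hfij, hij⟩ := hinj
  -- wlog i < j
  obtain ⟨i, j, hi, hj, hfij, hlt⟩ : ∃ i j, i ≤ n ∧ j ≤ n ∧ f i = f j ∧ i < j := by
    rcases Nat.lt_or_ge i j with h' | h'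
    · exact ⟨i, j, hi, hj, hfij, h'⟩
    · exact ⟨j, i, hj, hi, hfij.symm, by omega⟩
  have hmem : n - (j - i) ∈ s := by
    refine ⟨fun k => if k ≤ i then f k else f (k + (j - i)),
      fun k => if k < i then g k else g (k + (j - i)), ?_, by simp [h0], ?_⟩
    · intro k hk
      by_cases hc : k < i
      · simp only [if_pos hc, if_pos (by omega : k ≤ i), if_pos (by omega : k + 1 ≤ i)]
        exact hw k (by omega)
      · have := hw (k + (j - i)) (by omega)
        simp only [if_neg hc, if_neg (by omega : ¬ k + 1 ≤ i)]
        have hfk : (if k ≤ i then f k else f (k + (j - i))) = f (k + (j - i)) := by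
          by_cases h' : k ≤ i
          · have : k = i := by omega
            subst this
            simp only [if_pos le_rfl]
            rw [hfij]
            congr 1
            omega
          · simp [h']
        rw [hfk]
        have e1 : k + 1 + (j - i) = k + (j - i) + 1 := by omega
        rw [e1]
        exact this
    · by_cases h' : n - (j - i) ≤ i
      · simp only [if_pos h']
        have h2 : n - (j - i) = i ∧ j = n := by omega
        rw [h2.1, hfij, h2.2, hn]
      · simp only [if_neg h']
        rw [← hn]
        congr 1
        omega
  have := Nat.sInf_le hmem
  omega




theorem engine {G : Multigraph V E} [Fintype E] (hconn : G.Connected)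
    {W0 : Set E} {x y : E} {ux vx uy vy : V}
    (hx : G.Joins x ux vx) (hy : G.Joins y uy vy)
    {S : Set V} (hxS : x ∈ G.DD S) (hyS : y ∈ G.DD S) (hSW : G.DD S ⊆ W0)
    (hu : G.Reach W0ᶜ ux uy) (hv : G.Reach W0ᶜ vx vy) :
    ∃ c, G.IsCut c ∧ x ∈ c ∧ y ∈ c ∧ c ⊆ W0 := by
  classical
  set fam : Set (Set V) := {U | x ∈ G.DD U ∧ y ∈ G.DD U ∧ G.DD U ⊆ W0} with hfam
  have hSfam : S ∈ fam := ⟨hxS, hyS, hSW⟩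
  set vals : Set ℕ := (fun U => (G.DD U).ncard) '' fam with hvals
  have hvne : vals.Nonempty := ⟨_, S, hSfam, rfl⟩
  obtain ⟨U₀, hU₀fam, hU₀card⟩ : ∃ U₀ ∈ fam, (G.DD U₀).ncard = sInf vals := Nat.sInf_mem hvne
  set c₀ : Set E := G.DD U₀ with hc₀
  obtain ⟨hxc₀, hyc₀, hc₀W⟩ := hU₀fam
  have hmin : ∀ U ∈ fam, c₀.ncard ≤ (G.DD U).ncard := by
    intro U hU
    rw [hU₀card]
    exact Nat.sInf_le ⟨U, hU, rfl⟩
  -- reach classes of the two ends of x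
  set A : Set V := {w | G.Reach c₀ᶜ ux w} with hA
  set B : Set V := {w | G.Reach c₀ᶜ vx w} with hB
  have hW0c₀ : W0ᶜ ⊆ c₀ᶜ := Set.compl_subset_compl.mpr hc₀W
  have huxA : ux ∈ A := reach_refl _ _
  have hvxB : vx ∈ B := reach_refl _ _
  have huyA : uy ∈ A := reach_mono hW0c₀ hu
  have hvyB : vy ∈ B := reach_mono hW0c₀ hv
  have hdisj : ∀ w, w ∈ A → w ∈ B → False := by
    intro w hwA hwB
    have hr : G.Reach c₀ᶜ ux vx := reach_trans hwA (reach_symm hwB)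
    have hside : ux ∈ U₀ ↔ vx ∈ U₀ :=
      reach_side (fun e he => Set.notMem_of_mem_compl he) hr
    rw [mem_DD_iff hx] at hxc₀
    tauto
  -- A and B are closed under c₀-avoiding reach
  have hAcl : ∀ u w, G.Reach c₀ᶜ u w → (u ∈ A ↔ w ∈ A) := by
    intro u w hr
    constructor
    · intro h; exact reach_trans h hr
    · intro h; exact reach_trans h (reach_symm hr)
  have hBcl : ∀ u w, G.Reach c₀ᶜ u w → (u ∈ B ↔ w ∈ B) := by
    intro u w hr
    constructor
    · intro h; exact reach_trans h hr
    · intro h; exact reach_trans h (reach_symm hr)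
  have hDDsub : ∀ (C : Set V), (∀ u w, G.Reach c₀ᶜ u w → (u ∈ C ↔ w ∈ C)) → G.DD C ⊆ c₀ := by
    intro C hCcl e he
    by_contra hec
    have hr : G.Reach c₀ᶜ (G.fst e) (G.snd e) := reach_step hec (joins_fst_snd G e)
    have := hCcl _ _ hr
    simp only [DD, Set.mem_setOf_eq] at he
    tauto
  have hDDA_sub : G.DD A ⊆ c₀ := hDDsub A hAcl
  have hDDB_sub : G.DD B ⊆ c₀ := hDDsub B hBcl
  have hxDDA : x ∈ G.DD A := by
    rw [mem_DD_iff hx]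
    exact Or.inl ⟨huxA, fun h => hdisj vx h hvxB⟩
  have hyDDA : y ∈ G.DD A := by
    rw [mem_DD_iff hy]
    exact Or.inl ⟨huyA, fun h => hdisj vy h hvyB⟩
  have hxDDB : x ∈ G.DD B := by
    rw [mem_DD_iff hx]
    exact Or.inr ⟨fun h => hdisj ux huxA h, hvxB⟩
  have hyDDB : y ∈ G.DD B := by
    rw [mem_DD_iff hy]
    exact Or.inr ⟨fun h => hdisj uy huyA h, hvyB⟩
  have hAfam : A ∈ fam := ⟨hxDDA, hyDDA, hDDA_sub.trans hc₀W⟩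
  have hBfam : B ∈ fam := ⟨hxDDB, hyDDB, hDDB_sub.trans hc₀W⟩
  have hDDA : G.DD A = c₀ :=
    Set.eq_of_subset_of_ncard_le hDDA_sub (hmin A hAfam) (Set.toFinite _)
  have hDDB : G.DD B = c₀ :=
    Set.eq_of_subset_of_ncard_le hDDB_sub (hmin B hBfam) (Set.toFinite _)
  -- every edge of c₀ has one end in A, one in B
  have hsplit : ∀ e ∈ c₀, (G.fst e ∈ A ∧ G.snd e ∈ B) ∨ (G.fst e ∈ B ∧ G.snd e ∈ A) := by
    intro e he
    have heA : e ∈ G.DD A := hDDA ▸ he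
    have heB : e ∈ G.DD B := hDDB ▸ he
    simp only [DD, Set.mem_setOf_eq] at heA heB
    by_cases h1 : G.fst e ∈ A
    · refine Or.inl ⟨h1, ?_⟩
      have h2 : G.snd e ∉ A := heA.mp h1
      have h3 : G.fst e ∉ B := fun h => hdisj _ h1 h
      tauto
    · refine Or.inr ⟨?_, ?_⟩
      · have h2 : G.snd e ∈ A := by tauto
        have h3 : G.snd e ∉ B := fun h => hdisj _ h2 h
        tauto
      · tauto
  -- every vertex is in A or B
  have hcover : ∀ w, w ∈ A ∪ B := by
    intro w
    have hstep : ∀ u w', G.Reach Set.univ u w' → (u ∈ A ∪ B ↔ w' ∈ A ∪ B) := by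
      intro u w' hr
      induction hr with
      | rel p q hpq =>
          obtain ⟨e, _, hj⟩ := hpq
          by_cases hec : e ∈ c₀
          · have hends : G.fst e ∈ A ∪ B ∧ G.snd e ∈ A ∪ B := by
              rcases hsplit e hec with ⟨h1, h2⟩ | ⟨h1, h2⟩
              · exact ⟨Or.inl h1, Or.inr h2⟩
              · exact ⟨Or.inr h1, Or.inl h2⟩
            rcases hj with ⟨hj1, hj2⟩ | ⟨hj1, hj2⟩ <;> rw [← hj1, ← hj2]
            · exact iff_of_true hends.1 hends.2
            · exact iff_of_true hends.2 hends.1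
          · have hr' : G.Reach c₀ᶜ p q := reach_step hec hj
            have := hAcl _ _ hr'
            have := hBcl _ _ hr'
            simp only [Set.mem_union]
            tauto
      | refl p => rfl
      | symm p q _ ih => exact ih.symm
      | trans p q r _ _ ih1 ih2 => exact ih1.trans ih2
    exact (hstep ux w (hconn ux w)).mp (Or.inl huxA)
  have hBAc : B = Aᶜ := by
    ext w
    simp only [Set.mem_compl_iff]
    constructor
    · intro hwB hwA; exact hdisj w hwA hwB
    · intro hwA
      rcases hcover w with h | h
      · exact absurd h hwA
      · exact h
  refine ⟨c₀, ⟨A, ⟨ux, huxA⟩, ⟨vx, hBAc ▸ hvxB⟩, ?_, ?_⟩, hxc₀, hyc₀, hc₀W⟩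
  · intro u w
    constructor
    · intro hr
      rcases hcover u with h | h
      · exact Or.inl ⟨h, (hAcl u w hr).mp h⟩
      · exact Or.inr ⟨hBAc ▸ h, hBAc ▸ ((hBcl u w hr).mp h)⟩
    · rintro (⟨h1, h2⟩ | ⟨h1, h2⟩)
      · exact reach_trans (reach_symm h1) h2
      · rw [← hBAc] at h1 h2
        exact reach_trans (reach_symm h1) h2
  · intro e he
    rcases hsplit e he with ⟨h1, h2⟩ | ⟨h1, h2⟩
    · exact Or.inl ⟨h1, hBAc ▸ h2⟩
    · exact Or.inr ⟨hBAc ▸ h1, h2⟩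




theorem bond_refine {G : Multigraph V E} [Fintype E] (hconn : G.Connected)
    {S : Set V} {x : E} (hxS : x ∈ G.DD S) :
    ∃ c, G.IsCut c ∧ x ∈ c ∧ c ⊆ G.DD S := by
  obtain ⟨c, hc, hx, _, hsub⟩ := engine hconn (joins_fst_snd G x) (joins_fst_snd G x)
    hxS hxS (subset_refl _) (reach_refl _ _) (reach_refl _ _)
  exact ⟨c, hc, hx, hsub⟩

lemma mem_DD_symmDiff {G : Multigraph V E} {S T : Set V} {e : E} :
    e ∈ G.DD (symmDiff S T) ↔ ((e ∈ G.DD S ∧ e ∉ G.DD T) ∨ (e ∉ G.DD S ∧ e ∈ G.DD T)) := by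
  simp only [DD, Set.mem_setOf_eq, Set.mem_symmDiff]
  tauto

theorem cut_antichain {G : Multigraph V E} {b c : Set E}
    (hb : G.IsCut b) (hc : G.IsCut c) (hbc : b ⊆ c) : b = c := by
  obtain ⟨Ab, hAbne, hAbcne, hbiff, hbcross⟩ := hb
  obtain ⟨Ac, hAcne, hAccne, hciff, hccross⟩ := hc
  have hmono : ∀ u w, G.Reach cᶜ u w → G.Reach bᶜ u w :=
    fun u w => reach_mono (Set.compl_subset_compl.mpr hbc)
  have heq : b = G.DD Ab := cut_eq_DD hbiff hbcross
  have heqc : c = G.DD Ac := cut_eq_DD hciff hccross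
  obtain ⟨u0, hu0⟩ := hAcne
  obtain ⟨w0, hw0⟩ := hAccne
  have hside : ∀ z w, G.Reach bᶜ z w → ((z ∈ Ab ∧ w ∈ Ab) ∨ (z ∈ Abᶜ ∧ w ∈ Abᶜ)) :=
    fun z w h => (hbiff z w).mp h
  have hAc_same : ∀ w ∈ Ac, (u0 ∈ Ab ↔ w ∈ Ab) := by
    intro w hw
    have hr : G.Reach cᶜ u0 w := (hciff u0 w).mpr (Or.inl ⟨hu0, hw⟩)
    rcases hside _ _ (hmono _ _ hr) with ⟨h1, h2⟩ | ⟨h1, h2⟩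
    · exact iff_of_true h1 h2
    · exact iff_of_false h1 h2
  have hAcc_same : ∀ w ∈ Acᶜ, (w0 ∈ Ab ↔ w ∈ Ab) := by
    intro w hw
    have hr : G.Reach cᶜ w0 w := (hciff w0 w).mpr (Or.inr ⟨hw0, hw⟩)
    rcases hside _ _ (hmono _ _ hr) with ⟨h1, h2⟩ | ⟨h1, h2⟩
    · exact iff_of_true h1 h2
    · exact iff_of_false h1 h2
  -- u0 and w0 must be on different Ab-sides
  have hdiff : ¬ (u0 ∈ Ab ↔ w0 ∈ Ab) := by
    intro hiff
    by_cases hu : u0 ∈ Ab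
    · obtain ⟨z, hz⟩ := hAbcne
      have hzAb : z ∈ Ab := by
        by_cases hzc : z ∈ Ac
        · exact (hAc_same z hzc).mp hu
        · exact (hAcc_same z hzc).mp (hiff.mp hu)
      exact hz hzAb
    · obtain ⟨z, hz⟩ := hAbne
      have : z ∈ Ab → False := by
        intro hzAb
        by_cases hzc : z ∈ Ac
        · exact hu ((hAc_same z hzc).mpr hzAb)
        · exact hu (hiff.mpr ((hAcc_same z hzc).mpr hzAb))
      exact this hz
  by_cases hu : u0 ∈ Ab
  · -- Ac ⊆ Ab, Acᶜ ⊆ Abᶜ, so Ab = Ac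
    have h1 : Ac ⊆ Ab := fun w hw => (hAc_same w hw).mp hu
    have h2 : Acᶜ ⊆ Abᶜ := by
      intro w hw hwAb
      exact hdiff (iff_of_true hu ((hAcc_same w hw).mpr hwAb))
    have hAbAc : Ab = Ac := by
      apply Set.Subset.antisymm _ h1
      intro w hw
      by_contra hwc
      exact h2 hwc hw
    rw [heq, heqc, hAbAc]
  · -- Ac ⊆ Abᶜ, Acᶜ ⊆ Ab, so Ab = Acᶜ
    have h1 : Ac ⊆ Abᶜ := fun w hw hwAb => hu ((hAc_same w hw).mpr hwAb)
    have hw0Ab : w0 ∈ Ab := by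
      by_contra hw0c
      exact hdiff (iff_of_false hu hw0c)
    have h2 : Acᶜ ⊆ Ab := fun w hw => (hAcc_same w hw).mp hw0Ab
    have hAbAcc : Ab = Acᶜ := by
      apply Set.Subset.antisymm
      · intro w hw
        by_contra hwc
        simp only [Set.mem_compl_iff, not_not] at hwc
        exact h1 hwc hw
      · exact h2
    rw [heq, heqc, hAbAcc, DD_compl]

theorem G4 {G : Multigraph V E} [Fintype E] (hconn : G.Connected) :
    ∀ n (c d : Set E), (c ∪ d).ncard = n → G.IsCut c → G.IsCut d → (c ∩ d).Nonempty →
    ∀ x, x ∈ c → ∀ y, y ∈ d → ∃ b, G.IsCut b ∧ b ⊆ c ∪ d ∧ x ∈ b ∧ y ∈ b := by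
  intro n
  induction n using Nat.strong_induction_on with
  | _ n IH =>
    intro c d hn hc hd ⟨f, hfc, hfd⟩ x hx y hy
    by_cases hyc : y ∈ c
    · exact ⟨c, hc, Set.subset_union_left, hx, hyc⟩
    by_cases hxd : x ∈ d
    · exact ⟨d, hd, Set.subset_union_right, hxd, hy⟩
    have hcut_c : G.IsCut c := hc
    have hcut_d : G.IsCut d := hd
    obtain ⟨Sc, hScne, hSccne, hciff, hccross⟩ := hc
    obtain ⟨Sd, hSdne, hSdcne, hdiff, hdcross⟩ := hd
    have hceq : c = G.DD Sc := cut_eq_DD hciff hccross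
    have hdeq : d = G.DD Sd := cut_eq_DD hdiff hdcross
    set Δ : Set E := G.DD (symmDiff Sc Sd) with hΔdef
    have hΔ : ∀ e, e ∈ Δ ↔ ((e ∈ c ∧ e ∉ d) ∨ (e ∉ c ∧ e ∈ d)) := by
      intro e
      rw [hΔdef, mem_DD_symmDiff, ← hceq, ← hdeq]
    have hΔsub : Δ ⊆ c ∪ d := by
      intro e he
      rcases (hΔ e).mp he with ⟨h1, _⟩ | ⟨_, h2⟩
      · exact Or.inl h1
      · exact Or.inr h2
    have hfΔ : f ∉ Δ := by
      intro hfΔ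
      rcases (hΔ f).mp hfΔ with ⟨_, h2⟩ | ⟨h1, _⟩
      · exact h2 hfd
      · exact h1 hfc
    have hxΔ : x ∈ Δ := (hΔ x).mpr (Or.inl ⟨hx, hxd⟩)
    have hyΔ : y ∈ Δ := (hΔ y).mpr (Or.inr ⟨hyc, hy⟩)
    obtain ⟨b1, hb1cut, hxb1, hb1Δ⟩ := bond_refine hconn (hΔdef ▸ hxΔ)
    rw [← hΔdef] at hb1Δ
    have hfb1 : f ∉ b1 := fun h => hfΔ (hb1Δ h)
    by_cases hyb1 : y ∈ b1
    · exact ⟨b1, hb1cut, hb1Δ.trans hΔsub, hxb1, hyb1⟩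
    have hb1d : ∃ g, g ∈ b1 ∧ g ∈ d := by
      by_contra hcon
      push_neg at hcon
      have hb1c : b1 ⊆ c := by
        intro e he
        rcases (hΔ e).mp (hb1Δ he) with ⟨h1, _⟩ | ⟨_, h2⟩
        · exact h1
        · exact absurd h2 (hcon e he)
      have := cut_antichain hb1cut hcut_c hb1c
      exact hfb1 (this ▸ hfc)
    obtain ⟨g1, hg1b1, hg1d⟩ := hb1d
    by_cases hcov : c ⊆ b1 ∪ d
    · -- symmetric: refine a bond through y
      obtain ⟨b2, hb2cut, hyb2, hb2Δ⟩ := bond_refine hconn (hΔdef ▸ hyΔ)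
      rw [← hΔdef] at hb2Δ
      have hfb2 : f ∉ b2 := fun h => hfΔ (hb2Δ h)
      by_cases hxb2 : x ∈ b2
      · exact ⟨b2, hb2cut, hb2Δ.trans hΔsub, hxb2, hyb2⟩
      have hb2c : ∃ g, g ∈ b2 ∧ g ∈ c := by
        by_contra hcon
        push_neg at hcon
        have hb2d : b2 ⊆ d := by
          intro e he
          rcases (hΔ e).mp (hb2Δ he) with ⟨h1, _⟩ | ⟨_, h2⟩
          · exact absurd h1 (hcon e he)
          · exact h2
        have := cut_antichain hb2cut hcut_d hb2d
        exact hfb2 (this ▸ hfd)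
      obtain ⟨g2, hg2b2, hg2c⟩ := hb2c
      by_cases hcov2 : d ⊆ b2 ∪ c
      · -- recurse on (b1, b2)
        have hg1c : g1 ∉ c := by
          intro hg1c
          rcases (hΔ g1).mp (hb1Δ hg1b1) with ⟨_, h2⟩ | ⟨h1, _⟩
          · exact h2 hg1d
          · exact h1 hg1c
        have hg1b2 : g1 ∈ b2 := by
          rcases hcov2 hg1d with h | h
          · exact h
          · exact absurd h hg1c
        have hsub : b1 ∪ b2 ⊆ c ∪ d := (Set.union_subset hb1Δ hb2Δ).trans hΔsub
        have hss : b1 ∪ b2 ⊂ c ∪ d := by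
          refine ⟨hsub, fun hcon => ?_⟩
          have : f ∈ b1 ∪ b2 := hcon (Or.inl hfc)
          rcases this with h | h
          · exact hfb1 h
          · exact hfb2 h
        have hlt : (b1 ∪ b2).ncard < n := hn ▸ Set.ncard_lt_ncard hss (Set.toFinite _)
        obtain ⟨b, hbcut, hbsub, hxb, hyb⟩ := IH _ hlt b1 b2 rfl hb1cut hb2cut
          ⟨g1, hg1b1, hg1b2⟩ x hxb1 y hyb2
        exact ⟨b, hbcut, hbsub.trans hsub, hxb, hyb⟩
      · -- recurse on (c, b2)
        rw [Set.not_subset] at hcov2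
        obtain ⟨z, hzd, hzn⟩ := hcov2
        have hsub : c ∪ b2 ⊆ c ∪ d :=
          Set.union_subset Set.subset_union_left (hb2Δ.trans hΔsub)
        have hss : c ∪ b2 ⊂ c ∪ d := by
          refine ⟨hsub, fun hcon => ?_⟩
          have : z ∈ c ∪ b2 := hcon (Or.inr hzd)
          rcases this with h | h
          · exact hzn (Or.inr h)
          · exact hzn (Or.inl h)
        have hlt : (c ∪ b2).ncard < n := hn ▸ Set.ncard_lt_ncard hss (Set.toFinite _)
        obtain ⟨b, hbcut, hbsub, hxb, hyb⟩ := IH _ hlt c b2 rfl hcut_c hb2cut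
          ⟨g2, hg2c, hg2b2⟩ x hx y hyb2
        exact ⟨b, hbcut, hbsub.trans hsub, hxb, hyb⟩
    · -- recurse on (b1, d)
      rw [Set.not_subset] at hcov
      obtain ⟨z, hzc, hzn⟩ := hcov
      have hsub : b1 ∪ d ⊆ c ∪ d :=
        Set.union_subset (hb1Δ.trans hΔsub) Set.subset_union_right
      have hss : b1 ∪ d ⊂ c ∪ d := by
        refine ⟨hsub, fun hcon => ?_⟩
        have : z ∈ b1 ∪ d := hcon (Or.inl hzc)
        rcases this with h | h
        · exact hzn (Or.inl h)
        · exact hzn (Or.inr h)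
      have hlt : (b1 ∪ d).ncard < n := hn ▸ Set.ncard_lt_ncard hss (Set.toFinite _)
      obtain ⟨b, hbcut, hbsub, hxb, hyb⟩ := IH _ hlt b1 d rfl hb1cut hcut_d
        ⟨g1, hg1b1, hg1d⟩ x hxb1 y hy
      exact ⟨b, hbcut, hbsub.trans hsub, hxb, hyb⟩




lemma joins_pair {G : Multigraph V E} {e : E} {u w u' w' : V}
    (h1 : G.Joins e u w) (h2 : G.Joins e u' w') :
    (u = u' ∧ w = w') ∨ (u = w' ∧ w = u') := by
  rcases h1 with ⟨a1, a2⟩ | ⟨a1, a2⟩ <;> rcases h2 with ⟨b1, b2⟩ | ⟨b1, b2⟩ <;>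
    subst_vars <;> tauto

lemma zmod_val_inj {n : ℕ} [NeZero n] {k1 k2 : ZMod n} (h : k1.val = k2.val) : k1 = k2 :=
  ZMod.val_injective n h

theorem cut_circuit {G : Multigraph V E} {c : Set E}
    (hc : G.IsCut c) {x y : E} (hx : x ∈ c) (hy : y ∈ c) (hxy : x ≠ y) :
    G.CircuitConnected x y := by
  classical
  haveI : Nonempty E := ⟨x⟩
  obtain ⟨A, hAne, hAcne, hiff, hcross⟩ := hc
  obtain ⟨a, b, hJx, haA, hbA⟩ : ∃ a b, G.Joins x a b ∧ a ∈ A ∧ b ∈ Aᶜ := by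
    rcases hcross x hx with ⟨h1, h2⟩ | ⟨h1, h2⟩
    · exact ⟨_, _, joins_fst_snd G x, h1, h2⟩
    · exact ⟨_, _, joins_symm (joins_fst_snd G x), h2, h1⟩
  obtain ⟨a', b', hJy, ha'A, hb'A⟩ : ∃ a' b', G.Joins y a' b' ∧ a' ∈ A ∧ b' ∈ Aᶜ := by
    rcases hcross y hy with ⟨h1, h2⟩ | ⟨h1, h2⟩
    · exact ⟨_, _, joins_fst_snd G y, h1, h2⟩
    · exact ⟨_, _, joins_symm (joins_fst_snd G y), h2, h1⟩
  have hreachA : G.Reach cᶜ a' a := (hiff a' a).mpr (Or.inl ⟨ha'A, haA⟩)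
  have hreachB : G.Reach cᶜ b b' := (hiff b b').mpr (Or.inr ⟨hbA, hb'A⟩)
  obtain ⟨p, fA, gA, hwA, hA0, hAp, hAinj⟩ := reach_walk_inj hreachA
  obtain ⟨q, fB, gB, hwB, hB0, hBq, hBinj⟩ := reach_walk_inj hreachB
  have hfAmem : ∀ t ≤ p, fA t ∈ A := by
    intro t ht
    have hr := walk_reach hwA t ht
    rw [hA0] at hr
    rcases (hiff a' (fA t)).mp hr with ⟨_, h⟩ | ⟨h', _⟩
    · exact h
    · exact absurd ha'A h'
  have hfBmem : ∀ t ≤ q, fB t ∈ Aᶜ := by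
    intro t ht
    have hr := walk_reach hwB t ht
    rw [hB0] at hr
    rcases (hiff b (fB t)).mp hr with ⟨h', _⟩ | ⟨_, h⟩
    · exact absurd h' hbA
    · exact h
  set n : ℕ := p + q + 2 with hn
  haveI : NeZero n := ⟨by omega⟩
  haveI : Fact (1 < n) := ⟨by omega⟩
  set w : ℕ → V := fun t => if t ≤ p then fA t else fB (t - (p+1)) with hwdef
  set h : ℕ → E := fun t => if t < p then gA t else if t = p then x
    else if t ≤ p + q then gB (t - (p+1)) else y with hhdef
  -- basic values
  have hw0 : w 0 = a' := by simp [hwdef, hA0]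
  have hwp : w p = a := by simp [hwdef, hAp]
  have hwp1 : w (p+1) = b := by simp [hwdef, hB0]
  have hwlast : w (p+q+1) = b' := by
    have : ¬ (p+q+1 ≤ p) := by omega
    simp [hwdef, this, hBq]
  -- vertex injectivity on [0, p+q+1]
  have hwinj : ∀ s ≤ p+q+1, ∀ t ≤ p+q+1, w s = w t → s = t := by
    intro s hs t ht hst
    by_cases h1 : s ≤ p <;> by_cases h2 : t ≤ p
    · simp only [hwdef, if_pos h1, if_pos h2] at hst
      exact hAinj s h1 t h2 hst
    · simp only [hwdef, if_pos h1, if_neg h2] at hst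
      exact absurd (hst ▸ hfAmem s h1) (hfBmem (t - (p+1)) (by omega))
    · simp only [hwdef, if_neg h1, if_pos h2] at hst
      exact absurd (hst ▸ hfBmem (s - (p+1)) (by omega)) (by simpa using hfAmem t h2)
    · simp only [hwdef, if_neg h1, if_neg h2] at hst
      have := hBinj (s - (p+1)) (by omega) (t - (p+1)) (by omega) hst
      omega
  -- region characterization of h
  have hchar : ∀ t, (t < p ∧ h t = gA t) ∨ (t = p ∧ h t = x) ∨
      (p < t ∧ t ≤ p + q ∧ h t = gB (t - (p+1))) ∨ (p + q < t ∧ h t = y) := by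
    intro t
    by_cases c1 : t < p
    · exact Or.inl ⟨c1, by simp [hhdef, c1]⟩
    by_cases c2 : t = p
    · exact Or.inr (Or.inl ⟨c2, by simp [hhdef, c2]⟩)
    by_cases c3 : t ≤ p + q
    · exact Or.inr (Or.inr (Or.inl ⟨by omega, c3, by simp [hhdef, c1, c2, c3]⟩))
    · exact Or.inr (Or.inr (Or.inr ⟨by omega, by simp [hhdef, c1, c2, c3]⟩))
  have hgAmem : ∀ i < p, gA i ∈ cᶜ := fun i hi => (hwA i hi).1
  have hgBmem : ∀ i < q, gB i ∈ cᶜ := fun i hi => (hwB i hi).1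
  have hgAJ : ∀ i < p, G.Joins (gA i) (fA i) (fA (i+1)) := fun i hi => (hwA i hi).2
  have hgBJ : ∀ i < q, G.Joins (gB i) (fB i) (fB (i+1)) := fun i hi => (hwB i hi).2
  -- pairwise distinctness facts
  have hgAgA : ∀ i < p, ∀ j < p, gA i = gA j → i = j := by
    intro i hi j hj hij
    rcases joins_pair (hgAJ i hi) (hij ▸ hgAJ j hj) with ⟨e1, e2⟩ | ⟨e1, e2⟩
    · exact hAinj i (by omega) j (by omega) e1
    · have := hAinj i (by omega) (j+1) (by omega) e1
      have := hAinj (i+1) (by omega) j (by omega) e2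
      omega
  have hgBgB : ∀ i < q, ∀ j < q, gB i = gB j → i = j := by
    intro i hi j hj hij
    rcases joins_pair (hgBJ i hi) (hij ▸ hgBJ j hj) with ⟨e1, e2⟩ | ⟨e1, e2⟩
    · exact hBinj i (by omega) j (by omega) e1
    · have := hBinj i (by omega) (j+1) (by omega) e1
      have := hBinj (i+1) (by omega) j (by omega) e2
      omega
  have hgAgB : ∀ i < p, ∀ j < q, gA i ≠ gB j := by
    intro i hi j hj hij
    rcases joins_pair (hgAJ i hi) (hij ▸ hgBJ j hj) with ⟨e1, _⟩ | ⟨e1, _⟩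
    · exact (hfBmem j (by omega)) (e1 ▸ hfAmem i (by omega))
    · exact (hfBmem (j+1) (by omega)) (e1 ▸ hfAmem i (by omega))
  have hgAc : ∀ i < p, gA i ≠ x ∧ gA i ≠ y :=
    fun i hi => ⟨fun hcon => (hgAmem i hi) (hcon ▸ hx), fun hcon => (hgAmem i hi) (hcon ▸ hy)⟩
  have hgBc : ∀ i < q, gB i ≠ x ∧ gB i ≠ y :=
    fun i hi => ⟨fun hcon => (hgBmem i hi) (hcon ▸ hx), fun hcon => (hgBmem i hi) (hcon ▸ hy)⟩
  -- edge injectivity on [0, p+q+1]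
  have hhinj : ∀ s ≤ p+q+1, ∀ t ≤ p+q+1, h s = h t → s = t := by
    intro s hs t ht hst
    rcases hchar s with ⟨c1, e1⟩ | ⟨c1, e1⟩ | ⟨c1, c1', e1⟩ | ⟨c1, e1⟩ <;>
      rcases hchar t with ⟨c2, e2⟩ | ⟨c2, e2⟩ | ⟨c2, c2', e2⟩ | ⟨c2, e2⟩
    · exact hgAgA s c1 t c2 (by rw [← e1, ← e2, hst])
    · exact absurd (by rw [← e1, ← e2, hst]) (hgAc s c1).1
    · exact absurd (by rw [← e1, ← e2, hst]) (hgAgB s c1 (t - (p+1)) (by omega))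
    · exact absurd (by rw [← e1, ← e2, hst]) (hgAc s c1).2
    · exact absurd (by rw [← e2, ← e1, ← hst]) (hgAc t c2).1
    · omega
    · exact absurd (by rw [← e2, ← e1, ← hst] : gB (t-(p+1)) = x) (hgBc (t - (p+1)) (by omega)).1
    · exact absurd (by rw [← e1, ← e2, hst]) hxy
    · exact absurd (by rw [← e1, ← e2, hst] : gB (s-(p+1)) = gA t).symm (hgAgB t c2 (s - (p+1)) (by omega))
    · exact absurd (by rw [← e1, ← e2, hst] : gB (s-(p+1)) = x) (hgBc (s - (p+1)) (by omega)).1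
    · have := hgBgB (s - (p+1)) (by omega) (t - (p+1)) (by omega) (by rw [← e1, ← e2, hst])
      omega
    · exact absurd (by rw [← e1, ← e2, hst] : gB (s-(p+1)) = y) (hgBc (s - (p+1)) (by omega)).2
    · exact absurd (by rw [← e2, ← e1, ← hst] : gA t = y) (hgAc t c2).2
    · exact absurd (by rw [← e1, ← e2, hst] : y = x).symm hxy
    · exact absurd (by rw [← e2, ← e1, ← hst] : gB (t-(p+1)) = y) (hgBc (t - (p+1)) (by omega)).2
    · omega
  -- assemble circuit
  have hnlast : n - 1 = p + q + 1 := by omega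
  have hvadd : ∀ i : ZMod n, (i + 1).val = if i.val = p+q+1 then 0 else i.val + 1 := by
    intro i
    have hlt := ZMod.val_lt i
    have : (i + 1).val = (i.val + 1) % n := by
      rw [ZMod.val_add, ZMod.val_one]
    rw [this]
    by_cases hcase : i.val = p+q+1
    · rw [if_pos hcase]
      have hne : i.val + 1 = n := by omega
      rw [hne, Nat.mod_self]
    · rw [if_neg hcase]
      exact Nat.mod_eq_of_lt (by omega)
  refine ⟨n, fun k => w k.val, fun k => h k.val, ⟨by omega, ?_, ?_, ?_⟩, ?_, ?_⟩
  · -- injective v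
    intro k1 k2 h12
    have l1 := ZMod.val_lt k1
    have l2 := ZMod.val_lt k2
    exact zmod_val_inj (hwinj k1.val (by omega) k2.val (by omega) h12)
  · -- injective ed
    intro k1 k2 h12
    have l1 := ZMod.val_lt k1
    have l2 := ZMod.val_lt k2
    exact zmod_val_inj (hhinj k1.val (by omega) k2.val (by omega) h12)
  · -- joins
    intro i
    have hlt := ZMod.val_lt i
    set t := i.val with htdef
    show G.Joins (h t) (w t) (w ((i+1).val))
    rw [hvadd i, ← htdef]
    by_cases h4 : t = p+q+1
    · rw [if_pos h4]
      have hht : h t = y := by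
        rcases hchar t with ⟨c1, e1⟩ | ⟨c1, e1⟩ | ⟨c1, c1', e1⟩ | ⟨c1, e1⟩ <;> first
          | (exfalso; omega) | exact e1
      rw [hht, h4, hwlast, hw0]
      exact joins_symm hJy
    · rw [if_neg h4]
      rcases hchar t with ⟨c1, e1⟩ | ⟨c1, e1⟩ | ⟨c1, c1', e1⟩ | ⟨c1, e1⟩
      · have w1 : w t = fA t := by simp [hwdef, if_pos (by omega : t ≤ p)]
        have w2 : w (t+1) = fA (t+1) := by simp [hwdef, if_pos (by omega : t+1 ≤ p)]
        rw [e1, w1, w2]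
        exact hgAJ t c1
      · have w1 : w t = a := by rw [c1, hwp]
        have w2 : w (t+1) = b := by rw [c1, hwp1]
        rw [e1, w1, w2]
        exact hJx
      · have w1 : w t = fB (t - (p+1)) := by simp [hwdef, if_neg (by omega : ¬ t ≤ p)]
        have w2 : w (t+1) = fB (t - (p+1) + 1) := by
          have : t + 1 - (p+1) = t - (p+1) + 1 := by omega
          simp [hwdef, if_neg (by omega : ¬ t+1 ≤ p), this]
        rw [e1, w1, w2]
        exact hgBJ (t - (p+1)) (by omega)
      · omega
  · -- x in range
    refine ⟨(p : ZMod n), ?_⟩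
    show h ((p : ZMod n)).val = x
    rw [ZMod.val_cast_of_lt (by omega : p < n)]
    rcases hchar p with ⟨c1, e1⟩ | ⟨c1, e1⟩ | ⟨c1, c1', e1⟩ | ⟨c1, e1⟩ <;> first
      | (exfalso; omega) | exact e1
  · -- y in range
    refine ⟨((p+q+1 : ℕ) : ZMod n), ?_⟩
    show h (((p+q+1 : ℕ) : ZMod n)).val = y
    rw [ZMod.val_cast_of_lt (by omega : p+q+1 < n)]
    rcases hchar (p+q+1) with ⟨c1, e1⟩ | ⟨c1, e1⟩ | ⟨c1, c1', e1⟩ | ⟨c1, e1⟩ <;> first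
      | (exfalso; omega) | exact e1




theorem circuit_cut {G : Multigraph V E} [Fintype E] (hconn : G.Connected)
    {x y : E} (hcc : G.CircuitConnected x y) (hxy : x ≠ y) :
    ∃ c, G.IsCut c ∧ x ∈ c ∧ y ∈ c := by
  classical
  obtain ⟨n, v, ed, ⟨hn0, hvinj, hedinj, hJ⟩, ⟨i, hi⟩, ⟨j, hj⟩⟩ := hcc
  haveI : NeZero n := ⟨by omega⟩
  have hij : i ≠ j := by
    intro hcon
    exact hxy (hi ▸ hj ▸ hcon ▸ rfl)
  set δ : ℕ := (j - i).val with hδdef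
  have hδpos : 0 < δ := by
    rcases Nat.eq_zero_or_pos δ with h0 | h
    · exfalso
      exact hij (by
        have : j - i = 0 := (ZMod.val_eq_zero _).mp h0
        have := sub_eq_zero.mp this
        exact this.symm)
    · exact h
  have hδlt : δ < n := ZMod.val_lt _
  have castδ : ((δ : ℕ) : ZMod n) = j - i := by
    rw [hδdef, ZMod.natCast_val, ZMod.cast_id]
  have cinj : ∀ s t : ℕ, s < n → t < n → ((s : ZMod n) = (t : ZMod n)) → s = t := by
    intro s t hs ht hst
    rw [← ZMod.val_cast_of_lt hs, ← ZMod.val_cast_of_lt ht, hst]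
  have czero : ∀ s : ℕ, 0 < s → s < n → ((s : ZMod n) ≠ 0) := by
    intro s hs0 hsn hcon
    have := (ZMod.natCast_eq_zero_iff s n).mp hcon
    have := Nat.le_of_dvd hs0 this
    omega
  set T : Set (ZMod n) := {k | ∃ t : ℕ, t < δ ∧ k = i + 1 + (t : ZMod n)} with hTdef
  set P : Set V := v '' T with hPdef
  have hPmem : ∀ k, v k ∈ P ↔ k ∈ T := by
    intro k
    constructor
    · rintro ⟨k', hk', hvk⟩
      exact (hvinj hvk) ▸ hk'
    · intro hk
      exact ⟨k, hk, rfl⟩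
  have hiT : i ∉ T := by
    rintro ⟨t, ht, hteq⟩
    have h1 : ((1 + t : ℕ) : ZMod n) = 0 := by
      push_cast
      linear_combination -hteq
    exact czero (1 + t) (by omega) (by omega) h1
  have hjT : j ∈ T := by
    refine ⟨δ - 1, by omega, ?_⟩
    have : ((δ - 1 : ℕ) : ZMod n) = (δ : ZMod n) - 1 := by
      have : δ - 1 + 1 = δ := by omega
      calc ((δ - 1 : ℕ) : ZMod n) = ((δ - 1 + 1 : ℕ) : ZMod n) - 1 := by push_cast; ring
        _ = (δ : ZMod n) - 1 := by rw [this]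
    rw [this, castδ]
    ring
  have hj1T : j + 1 ∉ T := by
    rintro ⟨t, ht, hteq⟩
    have h1 : ((t : ℕ) : ZMod n) = ((δ : ℕ) : ZMod n) := by
      push_cast [castδ]
      linear_combination -hteq
    exact absurd (cinj t δ (by omega) (by omega) h1) (by omega)
  have hi1T : i + 1 ∈ T := ⟨0, by omega, by push_cast; ring⟩
  have hsuccT : ∀ k, k ∈ T → k ≠ j → k + 1 ∈ T := by
    rintro k ⟨t, ht, hteq⟩ hkj
    have htne : t ≠ δ - 1 := by
      intro hcon
      apply hkj
      subst hcon
      rw [hteq]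
      have h2 : ((δ - 1 : ℕ) : ZMod n) = (δ : ZMod n) - 1 := by
        calc ((δ - 1 : ℕ) : ZMod n) = ((δ - 1 + 1 : ℕ) : ZMod n) - 1 := by push_cast; ring
          _ = (δ : ZMod n) - 1 := by rw [(by omega : δ - 1 + 1 = δ)]
      rw [h2, castδ]
      ring
    exact ⟨t + 1, by omega, by rw [hteq]; push_cast; ring⟩
  have hsuccF : ∀ k, k ∉ T → k ≠ i → k + 1 ∉ T := by
    rintro k hkT hki ⟨t, ht, hteq⟩
    rcases Nat.eq_zero_or_pos t with h0 | hpos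
    · subst h0
      apply hki
      have : (k + 1 : ZMod n) = i + 1 := by rw [hteq]; push_cast; ring
      linear_combination this
    · apply hkT
      refine ⟨t - 1, by omega, ?_⟩
      have h2 : ((t - 1 : ℕ) : ZMod n) = (t : ZMod n) - 1 := by
        calc ((t - 1 : ℕ) : ZMod n) = ((t - 1 + 1 : ℕ) : ZMod n) - 1 := by push_cast; ring
          _ = (t : ZMod n) - 1 := by rw [(by omega : t - 1 + 1 = t)]
      rw [h2]
      linear_combination hteq
  -- x and y cross P
  have hJx : G.Joins x (v i) (v (i + 1)) := hi ▸ hJ i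
  have hJy : G.Joins y (v j) (v (j + 1)) := hj ▸ hJ j
  have hxDD : x ∈ G.DD P := by
    rw [mem_DD_iff hJx]
    exact Or.inr ⟨fun h => hiT ((hPmem i).mp h), (hPmem _).mpr hi1T⟩
  have hyDD : y ∈ G.DD P := by
    rw [mem_DD_iff hJy]
    exact Or.inl ⟨(hPmem _).mpr hjT, fun h => hj1T ((hPmem _).mp h)⟩
  -- non-crossing of interior circuit edges
  have hnocross : ∀ k, k ≠ i → k ≠ j → ed k ∉ G.DD P := by
    intro k hki hkj
    rw [mem_DD_iff (hJ k)]
    by_cases hk : k ∈ T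
    · have h1 : v k ∈ P := (hPmem k).mpr hk
      have h2 : v (k+1) ∈ P := (hPmem _).mpr (hsuccT k hk hkj)
      tauto
    · have h1 : v k ∉ P := fun h => hk ((hPmem k).mp h)
      have h2 : v (k+1) ∉ P := fun h => (hsuccF k hk hki) ((hPmem _).mp h)
      tauto
  -- arc 1 : from v (i+1) to v j inside T
  have harc1aux : ∀ t : ℕ, t < δ → G.Reach (G.DD P)ᶜ (v (i+1)) (v (i+1+(t : ZMod n))) := by
    intro t
    induction t with
    | zero => intro _; simpa using reach_refl _ _
    | succ t ih =>
        intro ht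
        have hstep : G.Reach (G.DD P)ᶜ (v (i+1+(t:ZMod n))) (v (i+1+((t+1 : ℕ):ZMod n))) := by
          set k : ZMod n := i + 1 + (t : ZMod n) with hkdef
          have hki : k ≠ i := by
            intro hcon
            have h1 : ((1 + t : ℕ) : ZMod n) = 0 := by push_cast; linear_combination hcon
            exact czero (1+t) (by omega) (by omega) h1
          have hkj : k ≠ j := by
            intro hcon
            have h1 : ((1 + t : ℕ) : ZMod n) = ((δ:ℕ) : ZMod n) := by
              push_cast [castδ]; linear_combination hcon
            have := cinj (1+t) δ (by omega) (by omega) h1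
            omega
          have hk1 : k + 1 = i + 1 + ((t+1 : ℕ) : ZMod n) := by push_cast; ring
          have := reach_step (Set.mem_compl (hnocross k hki hkj)) (hJ k)
          rwa [hk1] at this
        exact reach_trans (ih (by omega)) hstep
  have harc1 : G.Reach (G.DD P)ᶜ (v (i+1)) (v j) := by
    have := harc1aux (δ - 1) (by omega)
    have heq : i + 1 + ((δ - 1 : ℕ) : ZMod n) = j := by
      have h2 : ((δ - 1 : ℕ) : ZMod n) = (δ : ZMod n) - 1 := by
        calc ((δ - 1 : ℕ) : ZMod n) = ((δ - 1 + 1 : ℕ) : ZMod n) - 1 := by push_cast; ring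
          _ = (δ : ZMod n) - 1 := by rw [(by omega : δ - 1 + 1 = δ)]
      rw [h2, castδ]
      ring
    rwa [heq] at this
  -- arc 2 : from v (j+1) to v i outside T
  have harc2aux : ∀ t : ℕ, t ≤ n - δ - 1 → G.Reach (G.DD P)ᶜ (v (j+1)) (v (j+1+(t : ZMod n))) := by
    intro t
    induction t with
    | zero => intro _; simpa using reach_refl _ _
    | succ t ih =>
        intro ht
        have hstep : G.Reach (G.DD P)ᶜ (v (j+1+(t:ZMod n))) (v (j+1+((t+1 : ℕ):ZMod n))) := by
          set k : ZMod n := j + 1 + (t : ZMod n) with hkdef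
          have hki : k ≠ i := by
            intro hcon
            have h1 : ((δ + 1 + t : ℕ) : ZMod n) = 0 := by
              push_cast
              rw [castδ]
              linear_combination hcon
            exact czero (δ+1+t) (by omega) (by omega) h1
          have hkj : k ≠ j := by
            intro hcon
            have h1 : ((1 + t : ℕ) : ZMod n) = 0 := by push_cast; linear_combination hcon
            exact czero (1+t) (by omega) (by omega) h1
          have hk1 : k + 1 = j + 1 + ((t+1 : ℕ) : ZMod n) := by push_cast; ring
          have := reach_step (Set.mem_compl (hnocross k hki hkj)) (hJ k)
          rwa [hk1] at this
        exact reach_trans (ih (by omega)) hstep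
  have harc2 : G.Reach (G.DD P)ᶜ (v (j+1)) (v i) := by
    have := harc2aux (n - δ - 1) le_rfl
    have heq : j + 1 + ((n - δ - 1 : ℕ) : ZMod n) = i := by
      have h2 : ((n - δ - 1 : ℕ) : ZMod n) = (n : ZMod n) - (δ : ZMod n) - 1 := by
        calc ((n - δ - 1 : ℕ) : ZMod n) = ((n - δ - 1 + δ + 1 : ℕ) : ZMod n) - (δ:ZMod n) - 1 := by
              push_cast; ring
          _ = (n : ZMod n) - (δ : ZMod n) - 1 := by rw [(by omega : n - δ - 1 + δ + 1 = n)]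
      rw [h2, ZMod.natCast_self, castδ]
      ring
    rwa [heq] at this
  obtain ⟨c, hcut, hxc, hyc, _⟩ := engine hconn (joins_symm hJx) hJy hxDD hyDD
    (subset_refl _) harc1 (reach_symm harc2)
  exact ⟨c, hcut, hxc, hyc⟩


end Multigraph

/-- A partial order `le` on the edges such that every cut has a smallest element. -/
def CutSmallest {V E : Type*} (G : Multigraph V E) (le : E → E → Prop) : Prop :=
  ∀ c : Set E, G.IsCut c → ∃ e ∈ c, ∀ e' ∈ c, le e e'

/-- Let `le` be a minimal partial order on the edges of a finite connected graph
among those for which every cut has a smallest element. Then every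
circuit-connected component has a unique minimal edge, and every other edge `e`
of the component has a unique largest edge strictly smaller than it. -/
theorem stmt_8 {V E : Type*} [Fintype V] [Fintype E]
    (G : Multigraph V E) (hconn : G.Connected)
    (le : E → E → Prop) (hpo : IsPartialOrder E le) (hcs : CutSmallest G le)
    (hmin : ∀ le' : E → E → Prop, IsPartialOrder E le' → CutSmallest G le' →
      (∀ a b, le' a b → le a b) → ∀ a b, le a b → le' a b) :
    (∀ e : E, ∃! m : E, (m = e ∨ G.CircuitConnected m e) ∧
        ∀ e', (e' = e ∨ G.CircuitConnected e' e) → le m e') ∧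
    (∀ e : E, ¬ (∀ e', (e' = e ∨ G.CircuitConnected e' e) → le e e') →
        ∃! g : E, (le g e ∧ g ≠ e) ∧ ∀ a, le a e → a ≠ e → le a g) := by
  classical
  have hrefl : ∀ a, le a a := hpo.refl
  have htrans : ∀ a b c, le a b → le b c → le a c := fun a b c => hpo.trans a b c
  have hanti : ∀ a b, le a b → le b a → a = b := fun a b => hpo.antisymm a b
  -- the relation generated by cut-minimum pairs
  set kk : E → E → Prop :=
    fun a b => ∃ c, G.IsCut c ∧ a ∈ c ∧ b ∈ c ∧ ∀ w ∈ c, le a w with hkk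
  have h_kk_le : ∀ a b, kk a b → le a b := by
    rintro a b ⟨c, _, _, hbc, hall⟩
    exact hall b hbc
  have h_rtg_le : ∀ a b, Relation.ReflTransGen kk a b → le a b := by
    intro a b h
    induction h with
    | refl => exact hrefl a
    | tail _ hstep ih => exact htrans _ _ _ ih (h_kk_le _ _ hstep)
  have h_le_rtg : ∀ a b, le a b → Relation.ReflTransGen kk a b := by
    apply hmin
    · exact
        { refl := fun a => Relation.ReflTransGen.refl
          trans := fun a b c h1 h2 => Relation.ReflTransGen.trans h1 h2
          antisymm := fun a b h1 h2 => hanti a b (h_rtg_le _ _ h1) (h_rtg_le _ _ h2) }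
    · intro c hc
      obtain ⟨m, hm, hmall⟩ := hcs c hc
      exact ⟨m, hm, fun w hw => Relation.ReflTransGen.single ⟨c, hc, hm, hw, hmall⟩⟩
    · exact h_rtg_le
  -- comparable elements lie in a common cut
  have hT2 : ∀ a b, le a b → a ≠ b → ∃ c, G.IsCut c ∧ a ∈ c ∧ b ∈ c := by
    have aux : ∀ a b, Relation.ReflTransGen kk a b →
        a = b ∨ ∃ c, G.IsCut c ∧ a ∈ c ∧ b ∈ c := by
      intro a b h
      induction h with
      | refl => exact Or.inl rfl
      | tail hab hstep ih =>
          obtain ⟨d, hdcut, hbd, hzd, _⟩ := hstep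
          rcases ih with rfl | ⟨c0, hc0, hac0, hbc0⟩
          · exact Or.inr ⟨d, hdcut, hbd, hzd⟩
          · obtain ⟨bb, hbbcut, _, habb, hzbb⟩ :=
              Multigraph.G4 hconn _ c0 d rfl hc0 hdcut ⟨_, hbc0, hbd⟩ a hac0 _ hzd
            exact Or.inr ⟨bb, hbbcut, habb, hzbb⟩
    intro a b hab hne
    rcases aux a b (h_le_rtg a b hab) with rfl | hc
    · exact absurd rfl hne
    · exact hc
  -- every strict predecessor is dominated by a kk-predecessor
  have hdom : ∀ a e, le a e → a ≠ e → ∃ m, kk m e ∧ m ≠ e ∧ le a m := by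
    have aux : ∀ a b, Relation.ReflTransGen kk a b →
        a = b ∨ ∃ m, kk m b ∧ m ≠ b ∧ le a m := by
      intro a b h
      induction h with
      | refl => exact Or.inl rfl
      | @tail b z hab hstep ih =>
          by_cases hbz : b = z
          · subst hbz; exact ih
          · exact Or.inr ⟨b, hstep, hbz, h_rtg_le _ _ hab⟩
    intro a e hae hne
    rcases aux a e (h_le_rtg a e hae) with rfl | h
    · exact absurd rfl hne
    · exact h
  -- any two kk-predecessors of e are comparable
  have hchainG : ∀ e m1 m2, kk m1 e → kk m2 e → le m1 m2 ∨ le m2 m1 := by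
    rintro e m1 m2 ⟨c1, hc1, hm1c1, hec1, h1all⟩ ⟨c2, hc2, hm2c2, hec2, h2all⟩
    obtain ⟨b, hbcut, hbsub, hm1b, hm2b⟩ :=
      Multigraph.G4 hconn _ c1 c2 rfl hc1 hc2 ⟨e, hec1, hec2⟩ m1 hm1c1 m2 hm2c2
    obtain ⟨μ, hμb, hμall⟩ := hcs b hbcut
    rcases hbsub hμb with hμ1 | hμ2
    · have : m1 = μ := hanti _ _ (h1all μ hμ1) (hμall m1 hm1b)
      exact Or.inl (this ▸ hμall m2 hm2b)
    · have : m2 = μ := hanti _ _ (h2all μ hμ2) (hμall m2 hm2b)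
      exact Or.inr (this ▸ hμall m1 hm1b)
  -- maxima of finite chains
  have chain_extreme : ∀ (r : E → E → Prop), (∀ a, r a a) →
      (∀ a b c, r a b → r b c → r a c) →
      ∀ (s : Finset E), s.Nonempty → (∀ a ∈ s, ∀ b ∈ s, r a b ∨ r b a) →
      ∃ g ∈ s, ∀ a ∈ s, r a g := by
    intro r hr htr s
    induction s using Finset.induction_on with
    | empty => intro h; exact absurd h (by simp)
    | @insert a s hnotmem ih =>
        intro _ hch
        by_cases hsne : s.Nonempty
        · obtain ⟨g0, hg0s, hg0⟩ := ih hsne (fun a' ha' b hb =>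
            hch a' (Finset.mem_insert_of_mem ha') b (Finset.mem_insert_of_mem hb))
          rcases hch a (Finset.mem_insert_self a s) g0 (Finset.mem_insert_of_mem hg0s) with
            h1 | h1
          · refine ⟨g0, Finset.mem_insert_of_mem hg0s, ?_⟩
            intro x hx
            rcases Finset.mem_insert.mp hx with rfl | hxs
            · exact h1
            · exact hg0 x hxs
          · refine ⟨a, Finset.mem_insert_self a s, ?_⟩
            intro x hx
            rcases Finset.mem_insert.mp hx with rfl | hxs
            · exact hr x
            · exact htr _ _ _ (hg0 x hxs) h1
        · rw [Finset.not_nonempty_iff_eq_empty] at hsne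
          subst hsne
          refine ⟨a, Finset.mem_insert_self a _, ?_⟩
          intro x hx
          rcases Finset.mem_insert.mp hx with rfl | hxs
          · exact hr x
          · exact absurd hxs (by simp)
  -- greatest element below e among strict predecessors
  have hgreatest : ∀ e, (∃ a, le a e ∧ a ≠ e) →
      ∃ g, (le g e ∧ g ≠ e) ∧ ∀ a, le a e → a ≠ e → le a g := by
    intro e ⟨a0, ha0e, ha0ne⟩
    set Gs : Set E := {m | kk m e ∧ m ≠ e} with hGs
    have hGsfin : Gs.Finite := Set.toFinite _
    obtain ⟨m0, hm0, hm0ne, _⟩ := hdom a0 e ha0e ha0ne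
    have hne : hGsfin.toFinset.Nonempty := by
      rw [Set.Finite.toFinset_nonempty]
      exact ⟨m0, hm0, hm0ne⟩
    obtain ⟨g, hgmem, hgall⟩ := chain_extreme le hrefl htrans hGsfin.toFinset hne
      (by
        intro a ha b hb
        rw [Set.Finite.mem_toFinset] at ha hb
        exact hchainG e a b ha.1 hb.1)
    rw [Set.Finite.mem_toFinset] at hgmem
    refine ⟨g, ⟨h_kk_le _ _ hgmem.1, hgmem.2⟩, ?_⟩
    intro a hae hane
    obtain ⟨m, hm, hmne, ham⟩ := hdom a e hae hane
    have : le m g := hgall m (by rw [Set.Finite.mem_toFinset]; exact ⟨hm, hmne⟩)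
    exact htrans _ _ _ ham this
  -- downsets are chains
  have down_chain : ∀ N e, ({a | le a e}).ncard ≤ N →
      ∀ a b, le a e → le b e → le a b ∨ le b a := by
    intro N
    induction N with
    | zero =>
        intro e hcard a b _ _
        exfalso
        have h1 : e ∈ {a | le a e} := hrefl e
        have := (Set.ncard_pos (Set.toFinite _)).mpr ⟨e, h1⟩
        omega
    | succ N ih =>
        intro e hcard a b ha hb
        by_cases hae : a = e
        · subst hae; exact Or.inr hb
        by_cases hbe : b = e
        · subst hbe; exact Or.inl ha
        obtain ⟨g, ⟨hge, hgne⟩, hgall⟩ := hgreatest e ⟨a, ha, hae⟩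
        have hag : le a g := hgall a ha hae
        have hbg : le b g := hgall b hb hbe
        refine ih g ?_ a b hag hbg
        have hsub : {x | le x g} ⊆ {x | le x e} := fun x hx => htrans _ _ _ hx hge
        have hss : {x | le x g} ⊂ {x | le x e} := by
          refine ⟨hsub, fun hcon => hgne (hanti _ _ hge (hcon (hrefl e)))⟩
        have := Set.ncard_lt_ncard hss (Set.toFinite _)
        omega
  have comparable_down : ∀ e a b, le a e → le b e → le a b ∨ le b a := fun e =>
    down_chain ({a | le a e}).ncard e le_rfl
  -- least element of each downset
  have hleast : ∀ e, ∃ m, le m e ∧ ∀ a, le a e → le m a := by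
    intro e
    set Ds : Set E := {a | le a e} with hDs
    have hDfin : Ds.Finite := Set.toFinite _
    have hne : hDfin.toFinset.Nonempty := by
      rw [Set.Finite.toFinset_nonempty]
      exact ⟨e, hrefl e⟩
    obtain ⟨m, hmmem, hmall⟩ := chain_extreme (fun a b => le b a) hrefl
      (fun a b c h1 h2 => htrans _ _ _ h2 h1) hDfin.toFinset hne
      (by
        intro a ha b hb
        rw [Set.Finite.mem_toFinset] at ha hb
        exact (comparable_down e a b ha hb).symm)
    rw [Set.Finite.mem_toFinset] at hmmem
    refine ⟨m, hmmem, ?_⟩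
    intro a ha
    exact hmall a (by rw [Set.Finite.mem_toFinset]; exact ha)
  constructor
  · -- part 1
    intro e
    obtain ⟨m, hme, hmin'⟩ := hleast e
    have hmem : m = e ∨ G.CircuitConnected m e := by
      by_cases hm : m = e
      · exact Or.inl hm
      · obtain ⟨c, hcut, hmc, hec⟩ := hT2 m e hme hm
        exact Or.inr (Multigraph.cut_circuit hcut hmc hec hm)
    have hdomall : ∀ e', (e' = e ∨ G.CircuitConnected e' e) → le m e' := by
      intro e' he'
      by_cases he'e : e' = e
      · subst he'e; exact hme
      rcases he' with rfl | hcc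
      · exact hme
      · obtain ⟨c, hcut, he'c, hec⟩ := Multigraph.circuit_cut hconn hcc he'e
        obtain ⟨μ, hμc, hμall⟩ := hcs c hcut
        exact htrans _ _ _ (hmin' μ (hμall e hec)) (hμall e' he'c)
    refine ⟨m, ⟨hmem, hdomall⟩, ?_⟩
    rintro m' ⟨hmem', hdom'⟩
    exact hanti _ _ (hdom' m hmem) (hdomall m' hmem')
  · -- part 2
    intro e hne
    have hNE : ∃ a, le a e ∧ a ≠ e := by
      by_contra hcon
      push_neg at hcon
      apply hne
      intro e' he'
      by_cases he'e : e' = e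
      · subst he'e; exact hrefl _
      rcases he' with rfl | hcc
      · exact hrefl _
      · obtain ⟨c, hcut, he'c, hec⟩ := Multigraph.circuit_cut hconn hcc he'e
        obtain ⟨μ, hμc, hμall⟩ := hcs c hcut
        have hμe : μ = e := hcon μ (hμall e hec)
        exact hμe ▸ hμall e' he'c
    obtain ⟨g, ⟨hge, hgne⟩, hgall⟩ := hgreatest e hNE
    refine ⟨g, ⟨⟨hge, hgne⟩, hgall⟩, ?_⟩
    rintro g' ⟨⟨hg'e, hg'ne⟩, hg'all⟩
    exact hanti _ _ (hgall g' hg'e hg'ne) (hg'all g hge hgne)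
end

section
/- Let X be a category and W a full subcategory such that every object x of X admits a morphism to an object of W, unique up to unique isomorphism (i.e., the category of morphisms from x to objects of W is a connected groupoid with trivial automorphisms, equivalently has a weakly terminal structure as in Gillam minimality). Then an object of X is minimal (in the sense that for every cospan w₁ ← w₂ → z with z the object, there is a unique map w₁ → z commuting) if and only if its canonical map to W is an isomorphism. In particular, every object of W is minimal, and every morphism between minimal objects is an isomorphism. -/
open CategoryTheory

/-- Gillam minimality: `z` is minimal if for every pair of maps `i : w₂ ⟶ z`,
`j : w₂ ⟶ w₁` there is a unique `f : w₁ ⟶ z` with `j ≫ f = i`. -/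
def GillamMinimal {X : Type*} [Category X] (z : X) : Prop :=
  ∀ ⦃w₁ w₂ : X⦄ (i : w₂ ⟶ z) (j : w₂ ⟶ w₁), ∃! f : w₁ ⟶ z, j ≫ f = i

/-- Any morphism between Gillam-minimal objects is an isomorphism. -/
lemma gillam_min_iso {X : Type*} [Category X] {z w : X}
    (hz : GillamMinimal z) (hw : GillamMinimal w) (f : z ⟶ w) : IsIso f := by
  obtain ⟨g, hg, -⟩ := hz (𝟙 z) f
  refine ⟨g, hg, ?_⟩
  obtain ⟨k, hk, hku⟩ := hw f f
  have h1 := hku (g ≫ f) (show f ≫ g ≫ f = f by rw [← Category.assoc, hg, Category.id_comp])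
  have h2 := hku (𝟙 w) (Category.comp_id f)
  rw [h1, h2]

/-- Minimality transfers along isomorphisms. -/
lemma gillam_min_of_iso {X : Type*} [Category X] {z w : X}
    (hw : GillamMinimal w) (f : z ⟶ w) [IsIso f] : GillamMinimal z := by
  intro w₁ w₂ i j
  obtain ⟨g, hg, hu⟩ := hw (i ≫ f) j
  refine ⟨g ≫ inv f, ?_, ?_⟩
  · show j ≫ g ≫ inv f = i
    rw [← Category.assoc, hg, Category.assoc, IsIso.hom_inv_id, Category.comp_id]
  · intro y hy
    have : y ≫ f = g := hu (y ≫ f) (show j ≫ y ≫ f = i ≫ f by rw [← Category.assoc, hy])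
    rw [← this, Category.assoc, IsIso.hom_inv_id, Category.comp_id]

/-- Let `W` be a (full) subcategory of `X` such that every object of `X` admits
a map to an object of `W`, unique up to unique isomorphism. Then: every object
of `W` is minimal; an object `z` is minimal if and only if its canonical map to
an object of `W` is an isomorphism; and every morphism between minimal objects
is an isomorphism. -/
theorem stmt_11 {X : Type*} [Category X] (W : X → Prop)
    (hexists : ∀ x : X, ∃ w : X, W w ∧ Nonempty (x ⟶ w))
    (huniq : ∀ {x w w' : X}, W w → W w' → ∀ (f : x ⟶ w) (f' : x ⟶ w'),
      ∃! e : w ≅ w', f ≫ e.hom = f') :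
    (∀ w : X, W w → GillamMinimal w) ∧
    (∀ (z w : X), W w → ∀ f : z ⟶ w, (GillamMinimal z ↔ IsIso f)) ∧
    (∀ z w : X, GillamMinimal z → GillamMinimal w → ∀ f : z ⟶ w, IsIso f) := by
  have hWmin : ∀ w : X, W w → GillamMinimal w := by
    intro w hw w₁ w₂ i j
    obtain ⟨w', hw', ⟨g⟩⟩ := hexists w₁
    obtain ⟨e, he, -⟩ := huniq hw' hw (j ≫ g) i
    refine ⟨g ≫ e.hom, ?_, ?_⟩
    · show j ≫ g ≫ e.hom = i
      rw [← Category.assoc, he]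
    · intro y hy
      obtain ⟨a, ha, hau⟩ := huniq hw hw i i
      obtain ⟨b, hb, -⟩ := huniq hw hw y (g ≫ e.hom)
      have hbi : i ≫ b.hom = i := by
        rw [← hy, Category.assoc, hb, ← Category.assoc, he, hy]
      have hidi : i ≫ (Iso.refl w).hom = i := by simp
      have : b = Iso.refl w := by rw [hau b hbi, hau (Iso.refl w) hidi]
      rw [← hb, this]; simp
  refine ⟨hWmin, ?_, fun z w hz hw f => gillam_min_iso hz hw f⟩
  intro z w hw f
  constructor
  · intro hz; exact gillam_min_iso hz (hWmin w hw) f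
  · intro hf; exact gillam_min_of_iso (hWmin w hw) f
end
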